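/- arXiv:math/0512150 — 7 statements merged into one kernel-verified Lean document; each statement's English description precedes it below -/
import Mathlib

section
/- Let M be a module over a commutative ring and let J₁,…,Jₙ be submodules with ⋂ᵢ Jᵢ = {0}. Suppose that for all k with 1 ≤ k ≤ n, ⋂_{i<k}(Jᵢ + J_k) = (⋂_{i<k} Jᵢ) + J_k. Then the canonical map κ : M → M^c = {(mᵢ) ∈ ⊕ᵢ M/Jᵢ | images of mᵢ, mⱼ in M/(Jᵢ+Jⱼ) agree for all i,j} is surjective (hence bijective). -/
/-!
Lift the family `f` one index at a time. If `m` already lifts `f i` for all `i < k` and `x`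
lifts `f k`, compatibility puts `m - x` in `⋂_{i<k} (Jᵢ + J_k)`, which by the distributivity
hypothesis is `(⋂_{i<k} Jᵢ) + J_k`. Writing `m - x = a + b` accordingly, `m - a` lifts `f i`
for all `i ≤ k`.
-/

namespace Submodule

variable {R M ι : Type*} [Ring R] [AddCommGroup M] [Module R M]

theorem exists_sub_mem_iInf_and_sub_mem_of_iInf_sup_eq {I : ι → Submodule R M}
    {L : Submodule R M} {s : Set ι} (hdistrib : ⨅ i ∈ s, (I i ⊔ L) = (⨅ i ∈ s, I i) ⊔ L)
    {m x : M} (hmx : ∀ i ∈ s, m - x ∈ I i ⊔ L) :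
    ∃ m' : M, (∀ i ∈ s, m' - m ∈ I i) ∧ m' - x ∈ L := by
  have hmem : m - x ∈ (⨅ i ∈ s, I i) ⊔ L := by
    rw [← hdistrib]
    simpa only [mem_iInf] using hmx
  obtain ⟨a, ha, b, hb, hab⟩ := mem_sup.1 hmem
  refine ⟨m - a, fun i hi => ?_, ?_⟩
  · rw [sub_sub_cancel_left]
    exact neg_mem ((mem_iInf _).1 ((mem_iInf _).1 ha i) hi)
  · rwa [sub_right_comm, ← hab, add_sub_cancel_left]

theorem mapQ_id_mk_eq_mapQ_id_mk_iff {p q r : Submodule R M} (hp : p ≤ r.comap LinearMap.id)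
    (hq : q ≤ r.comap LinearMap.id) (x y : M) :
    p.mapQ r LinearMap.id hp (Quotient.mk x) = q.mapQ r LinearMap.id hq (Quotient.mk y) ↔
      x - y ∈ r := by
  rw [mapQ_apply, mapQ_apply, Quotient.eq, LinearMap.id_apply, LinearMap.id_apply]

theorem exists_mk_eq_of_iInf_sup_eq {J : ι → Submodule R M} {s : Set ι} {j : ι}
    (hdistrib : ⨅ i ∈ s, (J i ⊔ J j) = (⨅ i ∈ s, J i) ⊔ J j) (f : ∀ i, M ⧸ J i)
    (hf : ∀ i ∈ s, (J i).mapQ (J i ⊔ J j) LinearMap.id (by rw [comap_id]; exact le_sup_left)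
      (f i) = (J j).mapQ (J i ⊔ J j) LinearMap.id (by rw [comap_id]; exact le_sup_right) (f j))
    {m : M} (hm : ∀ i ∈ s, (Quotient.mk m : M ⧸ J i) = f i) :
    ∃ m' : M, (∀ i ∈ s, (Quotient.mk m' : M ⧸ J i) = f i) ∧ (Quotient.mk m' : M ⧸ J j) = f j := by
  obtain ⟨x, hx⟩ := Quotient.mk_surjective (J j) (f j)
  have hmx : ∀ i ∈ s, m - x ∈ J i ⊔ J j := fun i hi => by
    rw [← mapQ_id_mk_eq_mapQ_id_mk_iff, hm i hi, hx]
    exact hf i hi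
  obtain ⟨m', hm'm, hm'x⟩ := exists_sub_mem_iInf_and_sub_mem_of_iInf_sup_eq hdistrib hmx
  exact ⟨m', fun i hi => hm i hi ▸ (Quotient.eq _).2 (hm'm i hi), hx ▸ (Quotient.eq _).2 hm'x⟩

end Submodule

/-- If submodules `J 0, …, J (n-1)` of `M` cover `M` (intersect at zero) and satisfy
the distributivity condition `⋂_{i<k}(Jᵢ + J_k) = (⋂_{i<k} Jᵢ) + J_k` for all `k`,
then the canonical map `κ : M → M^c` is surjective. -/
theorem covering_completion_surjective_of_net
    {K M : Type*} [CommRing K] [AddCommGroup M] [Module K M] {n : ℕ}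
    (J : Fin n → Submodule K M)
    (hnet : ∀ k : Fin n,
      (⨅ i : Fin n, ⨅ _ : i < k, (J i ⊔ J k)) =
        (⨅ i : Fin n, ⨅ _ : i < k, J i) ⊔ J k) :
    ∀ f : ∀ i : Fin n, M ⧸ J i,
      (∀ i j : Fin n,
        Submodule.mapQ (J i) (J i ⊔ J j) LinearMap.id
            (by rw [Submodule.comap_id]; exact le_sup_left) (f i) =
          Submodule.mapQ (J j) (J i ⊔ J j) LinearMap.id
            (by rw [Submodule.comap_id]; exact le_sup_right) (f j)) →
      ∃ m : M, ∀ i : Fin n, (Submodule.Quotient.mk m : M ⧸ J i) = f i := by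
  intro f hf
  have hlift : ∀ k ≤ n, ∃ m : M, ∀ i : Fin n, (i : ℕ) < k →
      (Submodule.Quotient.mk m : M ⧸ J i) = f i := by
    intro k hk
    induction k with
    | zero => exact ⟨0, fun i hi => absurd hi (Nat.not_lt_zero _)⟩
    | succ k ih =>
      obtain ⟨m, hm⟩ := ih (Nat.le_of_succ_le hk)
      let kk : Fin n := ⟨k, hk⟩
      have hdistrib : ⨅ i ∈ Set.Iio kk, (J i ⊔ J kk) = (⨅ i ∈ Set.Iio kk, J i) ⊔ J kk :=
        hnet kk
      obtain ⟨m', hm'lt, hm'k⟩ :=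
        Submodule.exists_mk_eq_of_iInf_sup_eq hdistrib f (fun i _ => hf i kk) hm
      refine ⟨m', fun i hi => ?_⟩
      rcases Nat.lt_succ_iff_lt_or_eq.1 hi with hlt | heq
      · exact hm'lt i hlt
      · obtain rfl : i = kk := Fin.ext heq
        exact hm'k
  obtain ⟨m, hm⟩ := hlift n le_rfl
  exact ⟨m, fun i => hm i i.2⟩
end

section
/- Let M, M', M'' be K-modules with submodules K,L ⊆ M, K',L' ⊆ M', K'',L'' ⊆ M''. Let f : K+L → K'+L' and g : K'+L' → K''+L'' be linear maps such that f restricts to maps K → K' and L → L', g restricts to maps K' → K'' and L' → L'', and the sequences 0 → K → K' → K'' → 0 and 0 → L → L' → L'' → 0 are exact. Then the sequence 0 → K∩L → K'∩L' → K''∩L'' → 0 (with restricted maps) is exact if and only if the sequence 0 → K+L → K'+L' → K''+L'' → 0 is exact. -/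
/-! Modelling `K + L` as a module `X` with `K ⊔ L = ⊤`, everything is a diagram chase along
decompositions `x = a + b` with `a ∈ K`, `b ∈ L`. If `f (a + b) = 0` or `g (a' + b') = 0`, then
`f a = f (-b)` resp. `g a' = -g b'` lies in both summands, so exactness of the intersection
sequence applies to it; conversely, preimages in `K` and in `L` of an element of `K' ∩ L'` are
identified by injectivity of `f`. -/

open Function

structure IsShortExactOn {R X Y Z : Type*} [Ring R] [AddCommGroup X] [Module R X]
    [AddCommGroup Y] [Module R Y] [AddCommGroup Z] [Module R Z]
    (f : X →ₗ[R] Y) (g : Y →ₗ[R] Z)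
    (K : Submodule R X) (K' : Submodule R Y) (K'' : Submodule R Z) : Prop where
  injOn : Set.InjOn f K
  exactOn : ∀ y ∈ K', g y = 0 ↔ ∃ x ∈ K, f x = y
  surjOn : Set.SurjOn g K' K''

namespace IsShortExactOn

variable {R X Y Z : Type*} [Ring R] [AddCommGroup X] [Module R X]
  [AddCommGroup Y] [Module R Y] [AddCommGroup Z] [Module R Z]
  {f : X →ₗ[R] Y} {g : Y →ₗ[R] Z}
  {K L : Submodule R X} {K' L' : Submodule R Y} {K'' L'' : Submodule R Z}

theorem apply_apply_eq_zero (hK : IsShortExactOn f g K K' K'') (hfK : Set.MapsTo f K K')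
    {x : X} (hx : x ∈ K) : g (f x) = 0 :=
  (hK.exactOn (f x) (hfK hx)).2 ⟨x, hx, rfl⟩

theorem apply_apply_eq_zero_of_sup_eq_top (hK : IsShortExactOn f g K K' K'')
    (hL : IsShortExactOn f g L L' L'') (hfK : Set.MapsTo f K K') (hfL : Set.MapsTo f L L')
    (hX : K ⊔ L = ⊤) (x : X) : g (f x) = 0 := by
  obtain ⟨a, ha, b, hb, rfl⟩ := (Submodule.sup_eq_top_iff _ _).1 hX x
  rw [map_add, map_add, hK.apply_apply_eq_zero hfK ha, hL.apply_apply_eq_zero hfL hb, add_zero]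

theorem injective_of_exactOn_inf (hK : IsShortExactOn f g K K' K'')
    (hL : IsShortExactOn f g L L' L'') (hfK : Set.MapsTo f K K') (hfL : Set.MapsTo f L L')
    (hX : K ⊔ L = ⊤) (hcap : ∀ y ∈ K' ⊓ L', g y = 0 → ∃ x ∈ K ⊓ L, f x = y) :
    Injective f := by
  refine (injective_iff_map_eq_zero f).2 fun x hx => ?_
  obtain ⟨a, ha, b, hb, rfl⟩ := (Submodule.sup_eq_top_iff _ _).1 hX x
  have hb' : -b ∈ L := L.neg_mem hb
  have hfab : f a = f (-b) := by rw [map_neg, eq_neg_iff_add_eq_zero, ← map_add, hx]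
  have hfa : f a ∈ K' ⊓ L' := ⟨hfK ha, hfab ▸ hfL hb'⟩
  obtain ⟨c, ⟨hcK, hcL⟩, hfc⟩ := hcap (f a) hfa (hK.apply_apply_eq_zero hfK ha)
  have hca : c = a := hK.injOn hcK ha hfc
  have hcb : c = -b := hL.injOn hcL hb' (hfc.trans hfab)
  rw [← hca, hcb, neg_add_cancel]

theorem exact_of_surjOn_inf (hK : IsShortExactOn f g K K' K'') (hL : IsShortExactOn f g L L' L'')
    (hfK : Set.MapsTo f K K') (hfL : Set.MapsTo f L L')
    (hgK : Set.MapsTo g K' K'') (hgL : Set.MapsTo g L' L'') (hX : K ⊔ L = ⊤) (hY : K' ⊔ L' = ⊤)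
    (hcap : Set.SurjOn g (K' ⊓ L') (K'' ⊓ L'')) : Exact f g := by
  refine fun y => ⟨fun hy => ?_, ?_⟩
  · obtain ⟨a', ha', b', hb', rfl⟩ := (Submodule.sup_eq_top_iff _ _).1 hY y
    have hgab : g a' = -g b' := eq_neg_of_add_eq_zero_left (by rwa [← map_add])
    -- correct `a'` and `b'` by a common preimage `c'` of `g a' = -g b' ∈ K'' ∩ L''`
    obtain ⟨c', ⟨hc'K, hc'L⟩, hgc'⟩ := hcap ⟨hgK ha', hgab ▸ L''.neg_mem (hgL hb')⟩
    obtain ⟨a, ha, hfa⟩ := (hK.exactOn (a' - c') (K'.sub_mem ha' hc'K)).1 (by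
      rw [map_sub, hgc', sub_self])
    obtain ⟨b, hb, hfb⟩ := (hL.exactOn (b' + c') (L'.add_mem hb' hc'L)).1 (by
      rw [map_add, hgc', hgab, add_neg_cancel])
    exact ⟨a + b, by rw [map_add, hfa, hfb, sub_add_add_cancel]⟩
  · rintro ⟨x, rfl⟩
    exact hK.apply_apply_eq_zero_of_sup_eq_top hL hfK hfL hX x

theorem surjective_of_surjOn (hK : Set.SurjOn g K' K'') (hL : Set.SurjOn g L' L'')
    (hZ : K'' ⊔ L'' = ⊤) : Surjective g := by
  intro z
  obtain ⟨a'', ha'', b'', hb'', rfl⟩ := (Submodule.sup_eq_top_iff _ _).1 hZ z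
  obtain ⟨a', -, hga'⟩ := hK ha''
  obtain ⟨b', -, hgb'⟩ := hL hb''
  exact ⟨a' + b', by rw [map_add, hga', hgb']⟩

theorem exactOn_inf_of_injective (hK : IsShortExactOn f g K K' K'')
    (hL : IsShortExactOn f g L L' L'') (hf : Injective f) :
    ∀ y ∈ K' ⊓ L', g y = 0 ↔ ∃ x ∈ K ⊓ L, f x = y := by
  rintro y ⟨hyK, hyL⟩
  refine ⟨fun hy => ?_, fun ⟨x, ⟨hxK, _⟩, hxy⟩ => (hK.exactOn y hyK).2 ⟨x, hxK, hxy⟩⟩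
  obtain ⟨a, ha, hfa⟩ := (hK.exactOn y hyK).1 hy
  obtain ⟨b, hb, hfb⟩ := (hL.exactOn y hyL).1 hy
  exact ⟨a, ⟨ha, hf (hfa.trans hfb.symm) ▸ hb⟩, hfa⟩

theorem surjOn_inf_of_exact (hK : IsShortExactOn f g K K' K'') (hL : IsShortExactOn f g L L' L'')
    (hfK : Set.MapsTo f K K') (hfL : Set.MapsTo f L L') (hX : K ⊔ L = ⊤) (hfg : Exact f g) :
    Set.SurjOn g (K' ⊓ L') (K'' ⊓ L'') := by
  rintro z ⟨hzK, hzL⟩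
  obtain ⟨a', ha', hga'⟩ := hK.surjOn hzK
  obtain ⟨b', hb', hgb'⟩ := hL.surjOn hzL
  -- `a' - b' = f a + f b` with `a ∈ K`, `b ∈ L`, so `a' - f a = b' + f b` lies in `K' ∩ L'`
  obtain ⟨x, hx⟩ := (hfg (a' - b')).1 (by rw [map_sub, hga', hgb', sub_self])
  obtain ⟨a, ha, b, hb, rfl⟩ := (Submodule.sup_eq_top_iff _ _).1 hX x
  have hab : a' - f a = b' + f b := by
    rw [map_add, eq_sub_iff_add_eq] at hx
    rw [← hx]
    abel
  refine ⟨a' - f a, ⟨K'.sub_mem ha' (hfK ha), hab ▸ L'.add_mem hb' (hfL hb)⟩, ?_⟩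
  rw [map_sub, hga', hK.apply_apply_eq_zero hfK ha, sub_zero]

theorem inf_iff (hK : IsShortExactOn f g K K' K'') (hL : IsShortExactOn f g L L' L'')
    (hfK : Set.MapsTo f K K') (hfL : Set.MapsTo f L L')
    (hgK : Set.MapsTo g K' K'') (hgL : Set.MapsTo g L' L'')
    (hX : K ⊔ L = ⊤) (hY : K' ⊔ L' = ⊤) (hZ : K'' ⊔ L'' = ⊤) :
    IsShortExactOn f g (K ⊓ L) (K' ⊓ L') (K'' ⊓ L'') ↔
      Injective f ∧ Exact f g ∧ Surjective g :=
  ⟨fun h => ⟨hK.injective_of_exactOn_inf hL hfK hfL hX fun y hy => (h.exactOn y hy).1,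
      hK.exact_of_surjOn_inf hL hfK hfL hgK hgL hX hY h.surjOn,
      surjective_of_surjOn hK.surjOn hL.surjOn hZ⟩,
    fun ⟨hf, hfg, _⟩ => ⟨hf.injOn, hK.exactOn_inf_of_injective hL hf,
      hK.surjOn_inf_of_exact hL hfK hfL hX hfg⟩⟩

end IsShortExactOn

theorem Submodule.comap_subtype_sup_comap_subtype_eq_top {R M : Type*} [Semiring R]
    [AddCommMonoid M] [Module R M] (A B : Submodule R M) :
    A.comap (A ⊔ B).subtype ⊔ B.comap (A ⊔ B).subtype = ⊤ := by
  rw [← comap_sup_of_injective (A ⊔ B).injective_subtype (by simp) (by simp), comap_subtype_self]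

/-- Given maps `f : K+L → K'+L'` and `g : K'+L' → K''+L''` restricting to exact
sequences `0 → K → K' → K'' → 0` and `0 → L → L' → L'' → 0`, the restricted
sequence `0 → K∩L → K'∩L' → K''∩L'' → 0` is exact iff
`0 → K+L → K'+L' → K''+L'' → 0` is exact. -/
theorem cap_exact_iff_sum_exact
    {R M M' M'' : Type*} [CommRing R]
    [AddCommGroup M] [Module R M] [AddCommGroup M'] [Module R M']
    [AddCommGroup M''] [Module R M'']
    (A B : Submodule R M) (A' B' : Submodule R M') (A'' B'' : Submodule R M'')
    (f : ↥(A ⊔ B) →ₗ[R] ↥(A' ⊔ B')) (g : ↥(A' ⊔ B') →ₗ[R] ↥(A'' ⊔ B''))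
    -- `f` and `g` restrict to the summands:
    (hfA : ∀ x : ↥(A ⊔ B), (x : M) ∈ A → ((f x : M') ∈ A'))
    (hfB : ∀ x : ↥(A ⊔ B), (x : M) ∈ B → ((f x : M') ∈ B'))
    (hgA : ∀ y : ↥(A' ⊔ B'), (y : M') ∈ A' → ((g y : M'') ∈ A''))
    (hgB : ∀ y : ↥(A' ⊔ B'), (y : M') ∈ B' → ((g y : M'') ∈ B''))
    -- exactness of `0 → K → K' → K'' → 0`:
    (hAinj : ∀ x y : ↥(A ⊔ B), (x : M) ∈ A → (y : M) ∈ A → f x = f y → x = y)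
    (hAexact : ∀ y : ↥(A' ⊔ B'), (y : M') ∈ A' →
      (g y = 0 ↔ ∃ x : ↥(A ⊔ B), (x : M) ∈ A ∧ f x = y))
    (hAsurj : ∀ z : ↥(A'' ⊔ B''), (z : M'') ∈ A'' →
      ∃ y : ↥(A' ⊔ B'), (y : M') ∈ A' ∧ g y = z)
    -- exactness of `0 → L → L' → L'' → 0`:
    (hBinj : ∀ x y : ↥(A ⊔ B), (x : M) ∈ B → (y : M) ∈ B → f x = f y → x = y)
    (hBexact : ∀ y : ↥(A' ⊔ B'), (y : M') ∈ B' →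
      (g y = 0 ↔ ∃ x : ↥(A ⊔ B), (x : M) ∈ B ∧ f x = y))
    (hBsurj : ∀ z : ↥(A'' ⊔ B''), (z : M'') ∈ B'' →
      ∃ y : ↥(A' ⊔ B'), (y : M') ∈ B' ∧ g y = z) :
    -- exactness of `0 → K∩L → K'∩L' → K''∩L'' → 0` iff exactness of
    -- `0 → K+L → K'+L' → K''+L'' → 0`
    ((∀ x y : ↥(A ⊔ B), (x : M) ∈ A ⊓ B → (y : M) ∈ A ⊓ B → f x = f y → x = y) ∧
      (∀ y : ↥(A' ⊔ B'), (y : M') ∈ A' ⊓ B' →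
        (g y = 0 ↔ ∃ x : ↥(A ⊔ B), (x : M) ∈ A ⊓ B ∧ f x = y)) ∧
      (∀ z : ↥(A'' ⊔ B''), (z : M'') ∈ A'' ⊓ B'' →
        ∃ y : ↥(A' ⊔ B'), (y : M') ∈ A' ⊓ B' ∧ g y = z)) ↔
    (Function.Injective f ∧
      (∀ y : ↥(A' ⊔ B'), g y = 0 ↔ ∃ x : ↥(A ⊔ B), f x = y) ∧
      Function.Surjective g) := by
  have hK : IsShortExactOn f g (A.comap (A ⊔ B).subtype) (A'.comap (A' ⊔ B').subtype)
      (A''.comap (A'' ⊔ B'').subtype) :=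
    ⟨fun x hx y hy => hAinj x y hx hy, hAexact, fun z hz => hAsurj z hz⟩
  have hL : IsShortExactOn f g (B.comap (A ⊔ B).subtype) (B'.comap (A' ⊔ B').subtype)
      (B''.comap (A'' ⊔ B'').subtype) :=
    ⟨fun x hx y hy => hBinj x y hx hy, hBexact, fun z hz => hBsurj z hz⟩
  have key := hK.inf_iff hL (fun x hx => hfA x hx) (fun x hx => hfB x hx)
    (fun y hy => hgA y hy) (fun y hy => hgB y hy) (A.comap_subtype_sup_comap_subtype_eq_top B)
    (A'.comap_subtype_sup_comap_subtype_eq_top B') (A''.comap_subtype_sup_comap_subtype_eq_top B'')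
  exact ⟨fun ⟨hinj, hexact, hsurj⟩ => key.1 ⟨fun x hx y hy => hinj x y hx hy, hexact, hsurj⟩,
    fun h => let ⟨hinj, hexact, hsurj⟩ := key.2 h; ⟨fun x y hx hy => hinj hx hy, hexact, hsurj⟩⟩
end

section
/- Let K be a field and let f : M → N, g : M → N' be linear maps of K-vector spaces with ker(f) ∩ ker(g) = {0}. Then, as subspaces of M ⊗ M: ker(f ⊗ f) ∩ ker(g ⊗ g) = ker(f) ⊗ ker(g) + ker(g) ⊗ ker(f). -/
open TensorProduct

section Aux

variable {K : Type*} [Field K]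

/-- Over a field, the kernel of `f ⊗ f'` is `ker f ⊗ M' + M ⊗ ker f'`. -/
lemma aux_ker_map {M N M' N' : Type*}
    [AddCommGroup M] [Module K M] [AddCommGroup N] [Module K N]
    [AddCommGroup M'] [Module K M'] [AddCommGroup N'] [Module K N']
    (f : M →ₗ[K] N) (f' : M' →ₗ[K] N') :
    LinearMap.ker (TensorProduct.map f f') =
      LinearMap.range (LinearMap.lTensor M (LinearMap.ker f').subtype) ⊔
      LinearMap.range (LinearMap.rTensor M' (LinearMap.ker f).subtype) := by
  have h1 : Function.Exact (LinearMap.ker f).subtype f.rangeRestrict := by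
    rw [LinearMap.exact_iff, LinearMap.ker_rangeRestrict, Submodule.range_subtype]
  have h1' : Function.Exact (LinearMap.ker f').subtype f'.rangeRestrict := by
    rw [LinearMap.exact_iff, LinearMap.ker_rangeRestrict, Submodule.range_subtype]
  have hk := TensorProduct.map_ker h1 f.surjective_rangeRestrict h1'
    f'.surjective_rangeRestrict
  have hcomp : TensorProduct.map f f' =
      (TensorProduct.map (LinearMap.range f).subtype
        (LinearMap.range f').subtype).comp
        (TensorProduct.map f.rangeRestrict f'.rangeRestrict) := by
    rw [← TensorProduct.map_comp]
    congr 1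
  have hinj : Function.Injective
      (TensorProduct.map (LinearMap.range f).subtype (LinearMap.range f').subtype) := by
    rw [← LinearMap.lTensor_comp_rTensor, LinearMap.coe_comp]
    exact (Module.Flat.lTensor_preserves_injective_linearMap _
        (Submodule.injective_subtype _)).comp
      (Module.Flat.rTensor_preserves_injective_linearMap _ (Submodule.injective_subtype _))
  rw [hcomp, LinearMap.ker_comp, LinearMap.ker_eq_bot.mpr hinj, Submodule.comap_bot, hk]

end Aux

/-- For linear maps `f : M → N`, `g : M → N'` over a field with
`ker f ∩ ker g = 0`, inside `M ⊗ M` one has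
`ker(f⊗f) ∩ ker(g⊗g) = ker f ⊗ ker g + ker g ⊗ ker f`. -/
theorem ker_tensor_inter
    {K M N N' : Type*} [Field K]
    [AddCommGroup M] [Module K M] [AddCommGroup N] [Module K N]
    [AddCommGroup N'] [Module K N']
    (f : M →ₗ[K] N) (g : M →ₗ[K] N')
    (h : LinearMap.ker f ⊓ LinearMap.ker g = ⊥) :
    LinearMap.ker (TensorProduct.map f f) ⊓ LinearMap.ker (TensorProduct.map g g) =
      LinearMap.range
          (TensorProduct.map (LinearMap.ker f).subtype (LinearMap.ker g).subtype) ⊔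
        LinearMap.range
          (TensorProduct.map (LinearMap.ker g).subtype (LinearMap.ker f).subtype) := by
  set A := LinearMap.ker f with hA
  set B := LinearMap.ker g with hB
  obtain ⟨C, hC⟩ := Submodule.exists_isCompl (A ⊔ B)
  -- From `A ⊓ B = ⊥` and `IsCompl (A ⊔ B) C`, get complements
  have compl : ∀ (P Q : Submodule K M), P ⊓ Q = ⊥ → IsCompl (P ⊔ Q) C →
      IsCompl P (Q ⊔ C) := by
    intro P Q hPQ hc
    constructor
    · rw [disjoint_iff, Submodule.eq_bot_iff]
      rintro x ⟨hxP, hx⟩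
      obtain ⟨b, hb, c, hc', rfl⟩ := Submodule.mem_sup.mp hx
      have hcmem : c ∈ P ⊔ Q := by
        have : c = (b + c) - b := by abel
        rw [this]
        exact Submodule.sub_mem _ (Submodule.mem_sup_left hxP) (Submodule.mem_sup_right hb)
      have hc0 : c = 0 := by
        have := hc.disjoint.le_bot (show c ∈ (P ⊔ Q) ⊓ C from ⟨hcmem, hc'⟩)
        simpa using this
      subst hc0
      have hxQ : b + 0 ∈ Q := by simpa using hb
      have : b + 0 ∈ P ⊓ Q := ⟨hxP, hxQ⟩
      rw [hPQ] at this
      simpa using this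
    · rw [codisjoint_iff, ← sup_assoc]
      exact codisjoint_iff.mp hc.codisjoint
  have hAc : IsCompl A (B ⊔ C) := compl A B h hC
  have hBc : IsCompl B (A ⊔ C) := compl B A (by rw [inf_comm]; exact h) (sup_comm A B ▸ hC)
  -- projections
  set πA : M →ₗ[K] A := A.projectionOnto _ hAc with hπA
  set πB : M →ₗ[K] B := B.projectionOnto _ hBc with hπB
  set πC : M →ₗ[K] C := C.projectionOnto _ hC.symm with hπC
  set eA : M →ₗ[K] M := A.subtype ∘ₗ πA with heA
  set eB : M →ₗ[K] M := B.subtype ∘ₗ πB with heB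
  set eC : M →ₗ[K] M := C.subtype ∘ₗ πC with heC
  -- vanishing of projections on submodules
  have heA_B : eA ∘ₗ B.subtype = 0 := by
    ext x
    simp [heA, hπA, Submodule.projectionOnto_apply_of_mem_right hAc
      (Submodule.mem_sup_left x.2)]
  have heA_C : eA ∘ₗ C.subtype = 0 := by
    ext x
    simp [heA, hπA, Submodule.projectionOnto_apply_of_mem_right hAc
      (Submodule.mem_sup_right x.2)]
  have heB_A : eB ∘ₗ A.subtype = 0 := by
    ext x
    simp [heB, hπB, Submodule.projectionOnto_apply_of_mem_right hBc
      (Submodule.mem_sup_left x.2)]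
  have heB_C : eB ∘ₗ C.subtype = 0 := by
    ext x
    simp [heB, hπB, Submodule.projectionOnto_apply_of_mem_right hBc
      (Submodule.mem_sup_right x.2)]
  have heC_A : eC ∘ₗ A.subtype = 0 := by
    ext x
    simp [heC, hπC, Submodule.projectionOnto_apply_of_mem_right hC.symm
      (Submodule.mem_sup_left x.2)]
  have heC_B : eC ∘ₗ B.subtype = 0 := by
    ext x
    simp [heC, hπC, Submodule.projectionOnto_apply_of_mem_right hC.symm
      (Submodule.mem_sup_right x.2)]
  -- the three projections sum to the identity
  have hsum : eA + eB + eC = LinearMap.id := by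
    ext m
    have hm : m ∈ A ⊔ (B ⊔ C) := by
      rw [← sup_assoc, codisjoint_iff.mp hC.codisjoint]; trivial
    obtain ⟨a, ha, y, hy, rfl⟩ := Submodule.mem_sup.mp hm
    obtain ⟨b, hb, c, hc', rfl⟩ := Submodule.mem_sup.mp hy
    have h1 : eA a = a := by
      simp [heA, hπA, Submodule.projectionOnto_apply_left hAc ⟨a, ha⟩]
    have h2 : eB b = b := by
      simp [heB, hπB, Submodule.projectionOnto_apply_left hBc ⟨b, hb⟩]
    have h3 : eC c = c := by
      simp [heC, hπC, Submodule.projectionOnto_apply_left hC.symm ⟨c, hc'⟩]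
    have z1 : eA b = 0 := congrFun (congrArg DFunLike.coe heA_B) ⟨b, hb⟩
    have z2 : eA c = 0 := congrFun (congrArg DFunLike.coe heA_C) ⟨c, hc'⟩
    have z3 : eB a = 0 := congrFun (congrArg DFunLike.coe heB_A) ⟨a, ha⟩
    have z4 : eB c = 0 := congrFun (congrArg DFunLike.coe heB_C) ⟨c, hc'⟩
    have z5 : eC a = 0 := congrFun (congrArg DFunLike.coe heC_A) ⟨a, ha⟩
    have z6 : eC b = 0 := congrFun (congrArg DFunLike.coe heC_B) ⟨b, hb⟩
    simp only [LinearMap.add_apply, LinearMap.id_coe, id_eq, map_add, h1, h2, h3,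
      z1, z2, z3, z4, z5, z6]
    abel
  -- killing lemmas for tensors
  have kill_l : ∀ (p q : M →ₗ[K] M) (S : Submodule K M), q ∘ₗ S.subtype = 0 →
      (TensorProduct.map p q) ∘ₗ (LinearMap.lTensor M S.subtype) = 0 := by
    intro p q S hq
    rw [LinearMap.map_comp_lTensor, hq, TensorProduct.map_zero_right]
  have kill_r : ∀ (p q : M →ₗ[K] M) (S : Submodule K M), p ∘ₗ S.subtype = 0 →
      (TensorProduct.map p q) ∘ₗ (LinearMap.rTensor M S.subtype) = 0 := by
    intro p q S hp
    rw [LinearMap.map_comp_rTensor, hp, TensorProduct.map_zero_left]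
  apply le_antisymm
  · rintro x ⟨hx1, hx2⟩
    rw [SetLike.mem_coe, aux_ker_map f f] at hx1
    rw [SetLike.mem_coe, aux_ker_map g g] at hx2
    -- x vanishes under map e_i e_j whenever e_i and e_j both kill A or both kill B
    have vanish : ∀ (p q : M →ₗ[K] M) (S : Submodule K M),
        p ∘ₗ S.subtype = 0 → q ∘ₗ S.subtype = 0 →
        x ∈ LinearMap.range (LinearMap.lTensor M S.subtype) ⊔
          LinearMap.range (LinearMap.rTensor M S.subtype) →
        TensorProduct.map p q x = 0 := by
      intro p q S hp hq hx
      obtain ⟨u, hu, v, hv, rfl⟩ := Submodule.mem_sup.mp hx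
      obtain ⟨u', rfl⟩ := hu
      obtain ⟨v', rfl⟩ := hv
      have h1 : TensorProduct.map p q (LinearMap.lTensor M S.subtype u') = 0 :=
        LinearMap.ext_iff.mp (kill_l p q S hq) u'
      have h2 : TensorProduct.map p q (LinearMap.rTensor M S.subtype v') = 0 :=
        LinearMap.ext_iff.mp (kill_r p q S hp) v'
      rw [map_add, h1, h2, add_zero]
    have vAA : TensorProduct.map eA eA x = 0 := vanish eA eA B heA_B heA_B hx2
    have vAC : TensorProduct.map eA eC x = 0 := vanish eA eC B heA_B heC_B hx2
    have vCA : TensorProduct.map eC eA x = 0 := vanish eC eA B heC_B heA_B hx2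
    have vCC : TensorProduct.map eC eC x = 0 := vanish eC eC B heC_B heC_B hx2
    have vBB : TensorProduct.map eB eB x = 0 := vanish eB eB A heB_A heB_A hx1
    have vBC : TensorProduct.map eB eC x = 0 := vanish eB eC A heB_A heC_A hx1
    have vCB : TensorProduct.map eC eB x = 0 := vanish eC eB A heC_A heB_A hx1
    -- decompose the identity
    have hid : x = TensorProduct.map eA eB x + TensorProduct.map eB eA x := by
      have : TensorProduct.map (eA + eB + eC) (eA + eB + eC) x = x := by
        rw [hsum, TensorProduct.map_id]; rfl
      simp only [TensorProduct.map_add_left, TensorProduct.map_add_right,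
        LinearMap.add_apply] at this
      rw [vAA, vAC, vCA, vCC, vBB, vBC, vCB] at this
      simp only [zero_add, add_zero] at this
      exact this.symm.trans (add_comm _ _)
    rw [hid]
    apply Submodule.add_mem_sup
    · refine ⟨TensorProduct.map πA πB x, ?_⟩
      have : TensorProduct.map A.subtype B.subtype ∘ₗ TensorProduct.map πA πB =
          TensorProduct.map eA eB := by
        rw [← TensorProduct.map_comp]
      exact congrFun (congrArg DFunLike.coe this) x
    · refine ⟨TensorProduct.map πB πA x, ?_⟩
      have : TensorProduct.map B.subtype A.subtype ∘ₗ TensorProduct.map πB πA =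
          TensorProduct.map eB eA := by
        rw [← TensorProduct.map_comp]
      exact congrFun (congrArg DFunLike.coe this) x
  · have hfA : f ∘ₗ A.subtype = 0 := LinearMap.ext fun x => x.2
    have hgB : g ∘ₗ B.subtype = 0 := LinearMap.ext fun x => x.2
    apply sup_le
    · apply le_inf
      · rw [LinearMap.range_le_ker_iff, ← TensorProduct.map_comp, hfA,
          TensorProduct.map_zero_left]
      · rw [LinearMap.range_le_ker_iff, ← TensorProduct.map_comp, hgB,
          TensorProduct.map_zero_right]
    · apply le_inf
      · rw [LinearMap.range_le_ker_iff, ← TensorProduct.map_comp, hfA,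
          TensorProduct.map_zero_right]
      · rw [LinearMap.range_le_ker_iff, ← TensorProduct.map_comp, hgB,
          TensorProduct.map_zero_left]
end

section
/- Let K be a field, C a coalgebra, P an algebra and right C-comodule with B = P^{co C}, and suppose P(B)^C is a cleft C-Galois extension with cleaving map γ. If {bᵢ} is a linear basis of B and {hⱼ} a linear basis of C, then the family {bᵢγ(hⱼ) ⊗_B γ(h_k)} is a linear basis of P ⊗_B P. -/
/-!
Convolution with `f : C → P` acts on `P ⊗ C` by `p ⊗ c ↦ p f(c₁) ⊗ c₂`, anti-multiplicatively by
coassociativity, so the convolution-invertible `γ` acts by an automorphism. Colinearity of `γ` says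
that the canonical map sends `p ⊗_B γ(c)` to the image of `p ⊗ c` under this automorphism, so
composing the two gives `P ⊗_B P ≅ P ⊗ C` with `p ⊗_B γ(c) ↦ p ⊗ c`.

This yields the normal basis property `B ⊗ C ≅ P`, `b ⊗ c ↦ b γ(c)`: it is onto because
`p = p₀ γ⁻¹(p₁) γ(p₂)` with `p₀ γ⁻¹(p₁) ∈ B`, and one-to-one because `1 ⊗_B b γ(c) = b ⊗_B γ(c)`
goes to `b ⊗ c`, and `B ⊗ C → P ⊗ C` is injective. Hence the `bᵢ γ(hⱼ)` form a basis of `P`,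
and `bᵢ γ(hⱼ) ⊗_B γ(h_k)` corresponds to the basis `bᵢ γ(hⱼ) ⊗ h_k` of `P ⊗ C`.
-/

open TensorProduct LinearMap Coalgebra WithConv

section ConvAction

variable {K C P : Type*} [CommSemiring K] [AddCommMonoid C] [Module K C] [Semiring P] [Algebra K P]

noncomputable def mulLeftTensor {D E : Type*} [AddCommMonoid D] [Module K D] [AddCommMonoid E]
    [Module K E] (f : D →ₗ[K] P) : P ⊗[K] (D ⊗[K] E) →ₗ[K] P ⊗[K] E :=
  rTensor E (mul' K P) ∘ₗ (TensorProduct.assoc K P P E).symm.toLinearMap ∘ₗ lTensor P (rTensor E f)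

section
variable {D E : Type*} [AddCommMonoid D] [Module K D] [AddCommMonoid E] [Module K E]

@[simp] lemma mulLeftTensor_tmul (f : D →ₗ[K] P) (p : P) (d : D) (e : E) :
    mulLeftTensor f (p ⊗ₜ[K] (d ⊗ₜ[K] e)) = (p * f d) ⊗ₜ[K] e := by
  simp [mulLeftTensor]

lemma mulLeftTensor_comp_lTensor_rTensor {D' : Type*} [AddCommMonoid D'] [Module K D']
    (f : D →ₗ[K] P) (g : D' →ₗ[K] D) :
    mulLeftTensor (E := E) f ∘ₗ lTensor P (rTensor E g) = mulLeftTensor (f ∘ₗ g) := by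
  ext; simp

lemma lTensor_lTensor_comp_mulLeftTensor {E' : Type*} [AddCommMonoid E'] [Module K E']
    (f : D →ₗ[K] P) (g : E →ₗ[K] E') :
    lTensor P g ∘ₗ mulLeftTensor f = mulLeftTensor f ∘ₗ lTensor P (lTensor D g) := by
  ext; simp

lemma mulLeftTensor_comp_mulLeftTensor {D' : Type*} [AddCommMonoid D'] [Module K D']
    (f : D →ₗ[K] P) (g : D' →ₗ[K] P) :
    mulLeftTensor (E := E) f ∘ₗ mulLeftTensor g =
      mulLeftTensor (mul' K P ∘ₗ map g f) ∘ₗ lTensor P (TensorProduct.assoc K D' D E).symm := by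
  ext; simp [mul_assoc]

end

variable [Coalgebra K C]

noncomputable def convAct (f : WithConv (C →ₗ[K] P)) : Module.End K (P ⊗[K] C) :=
  mulLeftTensor f.ofConv ∘ₗ lTensor P comul

lemma convAct_mul (f g : WithConv (C →ₗ[K] P)) : convAct (f * g) = convAct g * convAct f := by
  calc convAct (f * g)
      = mulLeftTensor (mul' K P ∘ₗ map f.ofConv g.ofConv) ∘ₗ
          lTensor P (rTensor C comul ∘ₗ comul) := by
        rw [lTensor_comp, ← comp_assoc, mulLeftTensor_comp_lTensor_rTensor]; rfl
    _ = mulLeftTensor (mul' K P ∘ₗ map f.ofConv g.ofConv) ∘ₗ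
          lTensor P (TensorProduct.assoc K C C C).symm ∘ₗ lTensor P (lTensor C comul) ∘ₗ
            lTensor P comul := by
        rw [← coassoc_symm, lTensor_comp, lTensor_comp]
    _ = convAct g * convAct f := by
        rw [← comp_assoc, ← mulLeftTensor_comp_mulLeftTensor, comp_assoc,
          ← comp_assoc (lTensor P comul), ← lTensor_lTensor_comp_mulLeftTensor]
        rfl

lemma convAct_one : convAct (1 : WithConv (C →ₗ[K] P)) = 1 := by
  have : mulLeftTensor (1 : WithConv (C →ₗ[K] P)).ofConv =
      lTensor P ((TensorProduct.lid K C).toLinearMap ∘ₗ rTensor C counit) := by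
    ext p c c'
    simp [LinearMap.convOne_def, ← Algebra.commutes, ← Algebra.smul_def, smul_tmul]
  rw [convAct, this, ← lTensor_comp, comp_assoc, rTensor_counit_comp_comul]
  ext p c
  simp

noncomputable def convActEquiv (f g : WithConv (C →ₗ[K] P)) (hfg : f * g = 1) (hgf : g * f = 1) :
    P ⊗[K] C ≃ₗ[K] P ⊗[K] C :=
  .ofLinearMap (convAct f) (convAct g)
    (by rw [← Module.End.mul_eq_comp, ← convAct_mul, hgf, convAct_one]; rfl)
    (by rw [← Module.End.mul_eq_comp, ← convAct_mul, hfg, convAct_one]; rfl)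

end ConvAction

section Comodule

variable {K C P : Type*} [CommRing K] [AddCommMonoid C] [Module K C] [Ring P] [Algebra K P]

noncomputable abbrev coinvariants (ρ : P →ₗ[K] P ⊗[K] C) : Submodule K P :=
  ker (ρ - ((rTensor C (mul' K P)).comp (((TensorProduct.assoc K P P C).symm.toLinearMap).comp
    ((TensorProduct.mk K P (P ⊗[K] C)).flip (ρ 1)))))

lemma mem_coinvariants_iff {ρ : P →ₗ[K] P ⊗[K] C} {b : P} :
    b ∈ coinvariants ρ ↔ ρ b = rTensor C (mulLeft K b) (ρ 1) := by
  have : rTensor C (mulLeft K b) (ρ 1) =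
      rTensor C (mul' K P) ((TensorProduct.assoc K P P C).symm (b ⊗ₜ[K] ρ 1)) := by
    induction ρ 1 using TensorProduct.induction_on with
    | zero => simp
    | tmul q c => simp
    | add x y hx hy => simp only [map_add, tmul_add, hx, hy]
  simp [coinvariants, sub_eq_zero, this]

noncomputable def balancingRel (ρ : P →ₗ[K] P ⊗[K] C) : Submodule K (P ⊗[K] P) :=
  Submodule.span K {t : P ⊗[K] P | ∃ (p p' b : P),
    ρ b = rTensor C (mulLeft K b) (ρ 1) ∧ t = (p * b) ⊗ₜ[K] p' - p ⊗ₜ[K] (b * p')}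

lemma mk_one_tmul_mul_of_mem_coinvariants {ρ : P →ₗ[K] P ⊗[K] C} {b : P}
    (hb : b ∈ coinvariants ρ) (p : P) :
    (Submodule.Quotient.mk (1 ⊗ₜ[K] (b * p)) : P ⊗[K] P ⧸ balancingRel ρ) =
      Submodule.Quotient.mk (b ⊗ₜ[K] p) := by
  rw [Submodule.Quotient.eq, ← neg_mem_iff, neg_sub]
  exact Submodule.subset_span ⟨1, p, b, mem_coinvariants_iff.mp hb, by rw [one_mul]⟩

noncomputable abbrev canonicalMap (ρ : P →ₗ[K] P ⊗[K] C) : P ⊗[K] P →ₗ[K] P ⊗[K] C :=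
  (rTensor C (mul' K P)).comp (((TensorProduct.assoc K P P C).symm.toLinearMap).comp (lTensor P ρ))

variable [Coalgebra K C]

lemma canonicalMap_tmul_of_colinear {ρ : P →ₗ[K] P ⊗[K] C} {γ : C →ₗ[K] P}
    (hcolin : ∀ c, ρ (γ c) = rTensor C γ (comul c)) (p : P) (c : C) :
    canonicalMap ρ (p ⊗ₜ[K] γ c) = convAct (toConv γ) (p ⊗ₜ[K] c) := by
  simp [canonicalMap, convAct, mulLeftTensor, hcolin]

/-- In Sweedler notation: `p₀ γ'(p₁) γ(p₂) = p₀ (γ' * γ)(p₁) = p₀ ε(p₁) = p`. -/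
lemma mul'_map_comp_lTensor_comp_eq_self {ρ : P →ₗ[K] P ⊗[K] C}
    (hcoassoc : ∀ p : P, TensorProduct.assoc K P C C (rTensor C ρ (ρ p)) = lTensor P comul (ρ p))
    (hcounit : ∀ p : P, TensorProduct.rid K P (lTensor P counit (ρ p)) = p)
    {γ γ' : C →ₗ[K] P} (hconv : toConv γ' * toConv γ = 1) (p : P) :
    mul' K P (map (mul' K P ∘ₗ lTensor P γ' ∘ₗ ρ) γ (ρ p)) = p := by
  have hassoc : mul' K P ∘ₗ map (mul' K P ∘ₗ lTensor P γ') γ ∘ₗ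
      (TensorProduct.assoc K P C C).symm.toLinearMap =
      mul' K P ∘ₗ lTensor P (mul' K P ∘ₗ map γ' γ) := by
    ext; simp [mul_assoc]
  have hunit : mul' K P ∘ₗ lTensor P (toConv γ' * toConv γ).ofConv =
      (TensorProduct.rid K P).toLinearMap ∘ₗ lTensor P counit := by
    rw [hconv]
    ext; simp [LinearMap.convOne_def, Algebra.smul_def, Algebra.commutes]
  calc mul' K P (map (mul' K P ∘ₗ lTensor P γ' ∘ₗ ρ) γ (ρ p))
      = (mul' K P ∘ₗ map (mul' K P ∘ₗ lTensor P γ') γ ∘ₗ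
          (TensorProduct.assoc K P C C).symm.toLinearMap) (lTensor P comul (ρ p)) := by
        rw [comp_apply, comp_apply, ← hcoassoc, LinearEquiv.coe_coe, LinearEquiv.symm_apply_apply,
          ← comp_apply (f := map (mul' K P ∘ₗ lTensor P γ') γ), map_comp_rTensor]
        rfl
    _ = p := by
        rw [hassoc, ← LinearMap.comp_apply (g := lTensor P comul), comp_assoc, ← lTensor_comp]
        conv_rhs => rw [← hcounit p]
        exact congr($hunit (ρ p))

noncomputable def coinvMul (ρ : P →ₗ[K] P ⊗[K] C) (γ : C →ₗ[K] P) :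
    coinvariants ρ ⊗[K] C →ₗ[K] P :=
  mul' K P ∘ₗ map (coinvariants ρ).subtype γ

lemma coinvMul_surjective {ρ : P →ₗ[K] P ⊗[K] C}
    (hcoassoc : ∀ p : P, TensorProduct.assoc K P C C (rTensor C ρ (ρ p)) = lTensor P comul (ρ p))
    (hcounit : ∀ p : P, TensorProduct.rid K P (lTensor P counit (ρ p)) = p)
    {γ γ' : C →ₗ[K] P} (hconv : toConv γ' * toConv γ = 1)
    (hB : ∀ p : P, mul' K P (lTensor P γ' (ρ p)) ∈ coinvariants ρ) :
    Function.Surjective (coinvMul ρ γ) := by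
  intro p
  refine ⟨rTensor C ((mul' K P ∘ₗ lTensor P γ' ∘ₗ ρ).codRestrict _ hB) (ρ p), ?_⟩
  conv_rhs => rw [← mul'_map_comp_lTensor_comp_eq_self hcoassoc hcounit hconv p]
  rw [coinvMul, comp_apply, ← comp_apply (f := map _ γ), map_comp_rTensor]
  rfl

end Comodule

section Galois

variable {K C P : Type*} [CommRing K] [AddCommMonoid C] [Module K C] [Coalgebra K C] [Ring P]
  [Algebra K P] {ρ : P →ₗ[K] P ⊗[K] C} {γ γ' : C →ₗ[K] P}

noncomputable def galoisEquiv (hker : balancingRel ρ ≤ ker (canonicalMap ρ))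
    (hcan : Function.Bijective ((balancingRel ρ).liftQ (canonicalMap ρ) hker))
    (hγ : toConv γ * toConv γ' = 1) (hγ' : toConv γ' * toConv γ = 1) :
    (P ⊗[K] P ⧸ balancingRel ρ) ≃ₗ[K] P ⊗[K] C :=
  (LinearEquiv.ofBijective _ hcan).trans (convActEquiv _ _ hγ hγ').symm

lemma galoisEquiv_mk_tmul (hker : balancingRel ρ ≤ ker (canonicalMap ρ))
    (hcan : Function.Bijective ((balancingRel ρ).liftQ (canonicalMap ρ) hker))
    (hγ : toConv γ * toConv γ' = 1) (hγ' : toConv γ' * toConv γ = 1)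
    (hcolin : ∀ c, ρ (γ c) = rTensor C γ (comul c)) (p : P) (c : C) :
    galoisEquiv hker hcan hγ hγ' (Submodule.Quotient.mk (p ⊗ₜ[K] γ c)) = p ⊗ₜ[K] c :=
  (LinearEquiv.symm_apply_eq _).mpr (canonicalMap_tmul_of_colinear hcolin p c)

lemma coinvMul_injective [Module.Flat K C] (hker : balancingRel ρ ≤ ker (canonicalMap ρ))
    (hcan : Function.Bijective ((balancingRel ρ).liftQ (canonicalMap ρ) hker))
    (hγ : toConv γ * toConv γ' = 1) (hγ' : toConv γ' * toConv γ = 1)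
    (hcolin : ∀ c, ρ (γ c) = rTensor C γ (comul c)) :
    Function.Injective (coinvMul ρ γ) := by
  have hcomp : ((galoisEquiv hker hcan hγ hγ').toLinearMap ∘ₗ (balancingRel ρ).mkQ ∘ₗ
      TensorProduct.mk K P P 1) ∘ₗ coinvMul ρ γ = rTensor C (coinvariants ρ).subtype := by
    ext b c
    simp [coinvMul, mk_one_tmul_mul_of_mem_coinvariants b.2, galoisEquiv_mk_tmul _ _ _ _ hcolin]
  have hinj : Function.Injective (rTensor C (coinvariants ρ).subtype) :=
    Module.Flat.rTensor_preserves_injective_linearMap _ (Submodule.injective_subtype _)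
  rw [← hcomp, coe_comp] at hinj
  exact hinj.of_comp

end Galois

/-- For a cleft `C`-Galois extension `B = P^{co C} ⊆ P` over a field, if `{bᵢ}`
is a basis of `B` and `{hⱼ}` a basis of `C`, then `{bᵢ γ(hⱼ) ⊗_B γ(h_k)}` is a
basis of `P ⊗_B P` (realized as the quotient of `P ⊗ P` by the `B`-balancing
relations).  Coinvariance of `p` means `ρ(p) = p·ρ(1)`. -/
theorem cleft_basis_of_tensor_over_B
    {K C P ιB ιC : Type*} [Field K]
    [AddCommGroup C] [Module K C] [Coalgebra K C]
    [Ring P] [Algebra K P]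
    (ρ : P →ₗ[K] P ⊗[K] C)
    (hcoassoc : ∀ p : P,
      (TensorProduct.assoc K P C C) ((LinearMap.rTensor C ρ) (ρ p)) =
        (LinearMap.lTensor P (Coalgebra.comul (R := K))) (ρ p))
    (hcounit : ∀ p : P,
      (TensorProduct.rid K P)
          ((LinearMap.lTensor P (Coalgebra.counit (R := K))) (ρ p)) = p)
    (γ γ' : C →ₗ[K] P)
    (hcolin : ∀ c : C,
      ρ (γ c) = (LinearMap.rTensor C γ) (Coalgebra.comul (R := K) c))
    (hconv₁ : ∀ c : C,
      (LinearMap.mul' K P) ((TensorProduct.map γ γ') (Coalgebra.comul (R := K) c)) =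
        algebraMap K P (Coalgebra.counit (R := K) c))
    (hconv₂ : ∀ c : C,
      (LinearMap.mul' K P) ((TensorProduct.map γ' γ) (Coalgebra.comul (R := K) c)) =
        algebraMap K P (Coalgebra.counit (R := K) c))
    -- `p₍₀₎ γ'(p₍₁₎)` lies in the coinvariants `B = {p | ρ(p) = p·ρ(1)}`
    (hB : ∀ p : P,
      ρ (((LinearMap.mul' K P).comp ((LinearMap.lTensor P γ').comp ρ)) p) =
        (LinearMap.rTensor C
          (LinearMap.mulLeft K
            (((LinearMap.mul' K P).comp ((LinearMap.lTensor P γ').comp ρ)) p)))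
          (ρ 1))
    -- the submodule of `B`-balancing relations defining `P ⊗_B P`
    (relSub : Submodule K (P ⊗[K] P))
    (hrel : relSub = Submodule.span K
      {t : P ⊗[K] P | ∃ (p p' b : P),
        ρ b = (LinearMap.rTensor C (LinearMap.mulLeft K b)) (ρ 1) ∧
        t = (p * b) ⊗ₜ[K] p' - p ⊗ₜ[K] (b * p')})
    -- the canonical map `P ⊗_B P → P ⊗ C` is well defined and bijective
    (hker : relSub ≤ LinearMap.ker
      ((LinearMap.rTensor C (LinearMap.mul' K P)).comp
        (((TensorProduct.assoc K P P C).symm.toLinearMap).comp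
          (LinearMap.lTensor P ρ))))
    (hcan : Function.Bijective (Submodule.liftQ relSub
      ((LinearMap.rTensor C (LinearMap.mul' K P)).comp
        (((TensorProduct.assoc K P P C).symm.toLinearMap).comp
          (LinearMap.lTensor P ρ))) hker))
    -- bases of `B` and of `C`
    (bB : Module.Basis ιB K ↥(LinearMap.ker (ρ -
      ((LinearMap.rTensor C (LinearMap.mul' K P)).comp
        (((TensorProduct.assoc K P P C).symm.toLinearMap).comp
          ((TensorProduct.mk K P (P ⊗[K] C)).flip (ρ 1)))))))
    (bC : Module.Basis ιC K C) :
    LinearIndependent K (fun x : ιB × ιC × ιC =>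
      (Submodule.Quotient.mk
        (((bB x.1 : P) * γ (bC x.2.1)) ⊗ₜ[K] γ (bC x.2.2)) :
        (P ⊗[K] P) ⧸ relSub)) ∧
    Submodule.span K (Set.range (fun x : ιB × ιC × ιC =>
      (Submodule.Quotient.mk
        (((bB x.1 : P) * γ (bC x.2.1)) ⊗ₜ[K] γ (bC x.2.2)) :
        (P ⊗[K] P) ⧸ relSub))) = ⊤ := by
  obtain rfl : relSub = balancingRel ρ := hrel
  have hγ : toConv γ * toConv γ' = 1 := by ext c; exact hconv₁ c
  have hγ' : toConv γ' * toConv γ = 1 := by ext c; exact hconv₂ c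
  let bP : Module.Basis (ιB × ιC) K P := (bB.tensorProduct bC).map
    (LinearEquiv.ofBijective (coinvMul ρ γ) ⟨coinvMul_injective hker hcan hγ hγ' hcolin,
      coinvMul_surjective hcoassoc hcounit hγ' fun p => mem_coinvariants_iff.mpr (hB p)⟩)
  let b := ((bP.tensorProduct bC).map (galoisEquiv hker hcan hγ hγ').symm).reindex
    (Equiv.prodAssoc _ _ _)
  have hb : ⇑b = fun x : ιB × ιC × ιC => (Submodule.Quotient.mk
        (((bB x.1 : P) * γ (bC x.2.1)) ⊗ₜ[K] γ (bC x.2.2)) : (P ⊗[K] P) ⧸ balancingRel ρ) := by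
    funext x
    rw [Module.Basis.reindex_apply, Module.Basis.map_apply, LinearEquiv.symm_apply_eq,
      galoisEquiv_mk_tmul _ _ _ _ hcolin]
    simp [bP, coinvMul]
  rw [← hb]
  exact ⟨b.linearIndependent, b.span_eq⟩
end

section
/- In the quantum disc algebra O(D_p) with relation x*x − p x x* = 1 − p, for every n ≥ 0 one has (x*)ⁿ xⁿ = 1 + Σ_{m=1}^{n} (−1)ᵐ p^{nm − m(m−1)/2} [n choose m]_{p⁻¹} (1 − x x*)ᵐ, where [n choose m]_q denotes the q-binomial coefficient defined via [k]_q = 1 + q + … + q^{k−1}. -/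
noncomputable def qInt (q : ℂ) (k : ℕ) : ℂ := ∑ j ∈ Finset.range k, q ^ j
noncomputable def qFact (q : ℂ) (n : ℕ) : ℂ := ∏ k ∈ Finset.range n, qInt q (k + 1)
noncomputable def qChoose (q : ℂ) (n m : ℕ) : ℂ := qFact q n / (qFact q m * qFact q (n - m))

lemma qInt_add (q : ℂ) (a b : ℕ) : qInt q (a + b) = qInt q a + q ^ a * qInt q b := by
  simp only [qInt, Finset.sum_range_add, Finset.mul_sum, pow_add]

lemma qFact_succ (q : ℂ) (n : ℕ) : qFact q (n + 1) = qFact q n * qInt q (n + 1) :=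
  Finset.prod_range_succ _ n

lemma qFact_ne_zero (q : ℂ) (hq : ∀ k, qInt q (k + 1) ≠ 0) (n : ℕ) : qFact q n ≠ 0 :=
  Finset.prod_ne_zero_iff.2 fun k _ => hq k

lemma qChoose_zero (q : ℂ) (hq : ∀ k, qInt q (k + 1) ≠ 0) (n : ℕ) : qChoose q n 0 = 1 := by
  simp [qChoose, qFact, div_self, qFact_ne_zero q hq n]
  exact qFact_ne_zero q hq n

lemma qChoose_self (q : ℂ) (hq : ∀ k, qInt q (k + 1) ≠ 0) (n : ℕ) : qChoose q n n = 1 := by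
  simp only [qChoose, Nat.sub_self]
  simp [qFact]
  exact qFact_ne_zero q hq n

lemma qChoose_pascal (q : ℂ) (hq : ∀ k, qInt q (k + 1) ≠ 0) {n m : ℕ} (h : m + 1 ≤ n) :
    qChoose q (n + 1) (m + 1) = qChoose q n m + q ^ (m + 1) * qChoose q n (m + 1) := by
  have hnm : n - m = (n - m - 1) + 1 := by omega
  have key : qInt q (n + 1) = qInt q (m + 1) + q ^ (m + 1) * qInt q (n - m) := by
    have h1 : n + 1 = (m + 1) + (n - m) := by omega
    rw [h1, qInt_add]
  have e1 : (n + 1) - (m + 1) = n - m := by omega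
  have e2 : n - (m + 1) = n - m - 1 := by omega
  simp only [qChoose, e1, e2, qFact_succ q n, qFact_succ q m]
  rw [hnm, qFact_succ q (n - m - 1), ← hnm]
  rw [key]
  have hF := qFact_ne_zero q hq n
  have hA := qFact_ne_zero q hq m
  have hB := qFact_ne_zero q hq (n - m - 1)
  have hα := hq m
  have hβ : qInt q (n - m) ≠ 0 := by rw [hnm]; exact hq _
  field_simp

lemma expo_succ {n m : ℕ} (h : m ≤ n) :
    (n + 1) * (m + 1) - (m + 1) * ((m + 1) - 1) / 2 = (n * m - m * (m - 1) / 2) + (n + 1) := by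
  obtain ⟨t, ht⟩ : ∃ t, m * (m - 1) = 2 * t := by
    rcases Nat.even_or_odd m with he | ho
    · obtain ⟨k, hk⟩ := he; exact ⟨k * (m - 1), by subst hk; ring⟩
    · obtain ⟨k, hk⟩ := ho; exact ⟨m * k, by subst hk; simp; ring⟩
  have h2 : (m + 1) * ((m + 1) - 1) = 2 * (t + m) := by
    simp only [Nat.add_sub_cancel]
    have : (m + 1) * m = m * (m - 1) + 2 * m := by
      cases m with
      | zero => rfl
      | succ k => rw [Nat.add_sub_cancel]; ring
    omega
  have ht' : m * (m - 1) / 2 = t := by omega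
  have h2' : (m + 1) * ((m + 1) - 1) / 2 = t + m := by omega
  have htle : t ≤ n * m := by
    have : m * (m - 1) ≤ m * m := Nat.mul_le_mul_left m (Nat.sub_le m 1)
    have : m * m ≤ n * m := Nat.mul_le_mul_right m h
    nlinarith
  have hexp : (n + 1) * (m + 1) = n * m + n + m + 1 := by ring
  rw [ht', h2', hexp]
  omega

lemma qInt_real_pos_ne_zero {r : ℝ} (hr : 0 < r) (k : ℕ) : qInt ((r : ℝ) : ℂ) (k + 1) ≠ 0 := by
  have : qInt ((r : ℝ) : ℂ) (k + 1) = ((∑ j ∈ Finset.range (k + 1), r ^ j : ℝ) : ℂ) := by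
    simp [qInt]
  rw [this]
  have hpos : 0 < ∑ j ∈ Finset.range (k + 1), r ^ j :=
    Finset.sum_pos (fun j _ => pow_pos hr j) (by simp)
  exact_mod_cast ne_of_gt hpos

lemma expo_succ' {n m : ℕ} (h : m ≤ n) :
    (n + 1) * (m + 1) - (m + 1) * ((m + 1) - 1) / 2
      = (n * (m + 1) - (m + 1) * ((m + 1) - 1) / 2) + (m + 1) := by
  simp only [Nat.add_sub_cancel]
  obtain ⟨u, hu⟩ : ∃ u, (m + 1) * m = 2 * u := by
    have := Nat.even_mul_succ_self m
    obtain ⟨k, hk⟩ := this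
    exact ⟨k, by rw [mul_comm]; omega⟩
  have hu' : (m + 1) * m / 2 = u := by omega
  have hule : u ≤ n * (m + 1) := by
    have h1 : (m + 1) * m ≤ (m + 1) * n := Nat.mul_le_mul_left _ h
    have h2 : (m + 1) * n = n * (m + 1) := by ring
    omega
  have hexp : (n + 1) * (m + 1) = n * (m + 1) + (m + 1) := by ring
  rw [hu', hexp]
  omega

lemma coeff_rec (P : ℂ) (hP : P ≠ 0) (hq : ∀ k, qInt P⁻¹ (k + 1) ≠ 0)
    {n m : ℕ} (h1 : 1 ≤ m) (h2 : m ≤ n) :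
    (-1 : ℂ) ^ m * P ^ ((n + 1) * m - m * (m - 1) / 2) * qChoose P⁻¹ (n + 1) m
      = (-1 : ℂ) ^ m * P ^ (n * m - m * (m - 1) / 2) * qChoose P⁻¹ n m
        - P ^ (n + 1) *
          ((-1 : ℂ) ^ (m - 1) * P ^ (n * (m - 1) - (m - 1) * ((m - 1) - 1) / 2) *
            qChoose P⁻¹ n (m - 1)) := by
  obtain ⟨m', rfl⟩ : ∃ m', m = m' + 1 := ⟨m - 1, by omega⟩
  simp only [Nat.add_sub_cancel]
  have hm'n : m' + 1 ≤ n := h2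
  have e1 := expo_succ (show m' ≤ n by omega) (n := n)
  simp only [Nat.add_sub_cancel] at e1
  rw [qChoose_pascal P⁻¹ hq hm'n, e1]
  have h5 : P ^ ((n * m' - m' * (m' - 1) / 2) + (n + 1))
      = P ^ (n * m' - m' * (m' - 1) / 2) * P ^ (n + 1) := pow_add P _ _
  have h4 : P ^ ((n * m' - m' * (m' - 1) / 2) + (n + 1))
      = P ^ (n * (m' + 1) - (m' + 1) * m' / 2) * P ^ (m' + 1) := by
    rw [← pow_add]
    congr 1
    have e1 := expo_succ (by omega : m' ≤ n)
    have e2 := expo_succ' (by omega : m' ≤ n)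
    simp only [Nat.add_sub_cancel] at e1 e2
    omega
  have hq6 : (P⁻¹) ^ (m' + 1) * P ^ (m' + 1) = (1 : ℂ) := by
    rw [← mul_pow, inv_mul_cancel₀ hP, one_pow]
  linear_combination ((-1 : ℂ) ^ (m' + 1) * qChoose P⁻¹ n m') * h5
    + ((-1 : ℂ) ^ (m' + 1) * (P⁻¹) ^ (m' + 1) * qChoose P⁻¹ n (m' + 1)) * h4
    + ((-1 : ℂ) ^ (m' + 1) * P ^ (n * (m' + 1) - (m' + 1) * m' / 2) * qChoose P⁻¹ n (m' + 1)) * hq6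

lemma coeff_top (P : ℂ) (hP : P ≠ 0) (hq : ∀ k, qInt P⁻¹ (k + 1) ≠ 0) (n : ℕ) :
    (-1 : ℂ) ^ (n + 1) * P ^ ((n + 1) * (n + 1) - (n + 1) * ((n + 1) - 1) / 2) *
        qChoose P⁻¹ (n + 1) (n + 1)
      = - (P ^ (n + 1) *
          ((-1 : ℂ) ^ n * P ^ (n * n - n * (n - 1) / 2) * qChoose P⁻¹ n n)) := by
  rw [qChoose_self P⁻¹ hq, qChoose_self P⁻¹ hq, expo_succ (le_refl n), pow_add]
  ring

noncomputable def qdC (P : ℂ) (n m : ℕ) : ℂ :=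
  (-1 : ℂ) ^ m * P ^ (n * m - m * (m - 1) / 2) * qChoose P⁻¹ n m

lemma qdC_zero (P : ℂ) (hq : ∀ k, qInt P⁻¹ (k + 1) ≠ 0) (n : ℕ) : qdC P n 0 = 1 := by
  simp [qdC, qChoose_zero P⁻¹ hq]

lemma qdC_rec (P : ℂ) (hP : P ≠ 0) (hq : ∀ k, qInt P⁻¹ (k + 1) ≠ 0)
    {n m : ℕ} (h1 : 1 ≤ m) (h2 : m ≤ n) :
    qdC P (n + 1) m = qdC P n m - P ^ (n + 1) * qdC P n (m - 1) :=
  coeff_rec P hP hq h1 h2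

lemma qdC_top (P : ℂ) (hP : P ≠ 0) (hq : ∀ k, qInt P⁻¹ (k + 1) ≠ 0) (n : ℕ) :
    qdC P (n + 1) (n + 1) = -(P ^ (n + 1) * qdC P n n) :=
  coeff_top P hP hq n

/-- In the quantum disc algebra `O(D_p)` with relation `x*x − p x x* = 1 − p`,
for every `n ≥ 0`:
`(x*)ⁿ xⁿ = 1 + Σ_{m=1}^{n} (−1)ᵐ p^{nm − m(m−1)/2} [n choose m]_{p⁻¹} (1 − x x*)ᵐ`. -/
theorem quantum_disc_xsx_formula
    {A : Type*} [Ring A] [Algebra ℂ A] [StarRing A] [StarModule ℂ A]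
    (p : ℝ) (hp0 : 0 < p) (hp1 : p < 1) (x : A)
    (hrel : star x * x - (p : ℂ) • (x * star x) = algebraMap ℂ A (1 - (p : ℝ))) :
    ∀ n : ℕ, (star x) ^ n * x ^ n =
      1 + ∑ m ∈ Finset.Icc 1 n,
        ((-1 : ℂ) ^ m * (p : ℂ) ^ (n * m - m * (m - 1) / 2) *
          qChoose ((p : ℂ)⁻¹) n m) • (1 - x * star x) ^ m := by
  set P : ℂ := (p : ℂ) with hPdef
  have hPne : P ≠ 0 := by
    simp only [hPdef, ne_eq, Complex.ofReal_eq_zero]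
    exact ne_of_gt hp0
  have hq : ∀ k, qInt P⁻¹ (k + 1) ≠ 0 := by
    intro k
    have hPi : P⁻¹ = (((p⁻¹ : ℝ) : ℝ) : ℂ) := by
      rw [hPdef, ← Complex.ofReal_inv]
    rw [hPi]
    exact qInt_real_pos_ne_zero (inv_pos.2 hp0) k
  set y : A := 1 - x * star x with hy
  -- star x * x = 1 - P • y
  have hxx : star x * x = 1 - P • y := by
    have h1 : star x * x = algebraMap ℂ A (1 - (p : ℝ)) + P • (x * star x) := by
      rw [← hrel]; abel
    rw [h1, hy]
    rw [map_sub, map_one, Algebra.algebraMap_eq_smul_one, smul_sub]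
    abel
  -- y * x = P • (x * y)
  have hyx : y * x = P • (x * y) := by
    have h2 : y * x = x - x * (star x * x) := by
      rw [hy, sub_mul, one_mul, mul_assoc]
    rw [h2, hxx, mul_sub, mul_one, mul_smul_comm, sub_sub_cancel]
  -- y * x^k = P^k • (x^k * y)
  have hyxn : ∀ k : ℕ, y * x ^ k = (P ^ k) • (x ^ k * y) := by
    intro k
    induction k with
    | zero => simp
    | succ k ih =>
      rw [pow_succ' x k, ← mul_assoc, hyx, smul_mul_assoc, mul_assoc, ih,
        mul_smul_comm, smul_smul, ← mul_assoc, ← pow_succ']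
  -- the recursion step
  have hstep : ∀ k : ℕ, (star x) ^ (k + 1) * x ^ (k + 1)
      = (star x) ^ k * x ^ k - (P ^ (k + 1)) • ((star x) ^ k * x ^ k * y) := by
    intro k
    have e1 : (star x) ^ (k + 1) * x ^ (k + 1)
        = (star x) ^ k * ((star x * x) * x ^ k) := by
      rw [pow_succ (star x) k, pow_succ' x k]
      rw [mul_assoc, mul_assoc]
    rw [e1, hxx, sub_mul, one_mul, smul_mul_assoc, hyxn k, mul_sub, smul_smul,
      ← pow_succ', mul_smul_comm, ← mul_assoc]
  -- the main induction
  have key : ∀ n : ℕ, (star x) ^ n * x ^ n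
      = ∑ m ∈ Finset.range (n + 1), qdC P n m • y ^ m := by
    intro n
    induction n with
    | zero => simp [qdC_zero P hq]
    | succ n ih =>
      rw [hstep n, ih, Finset.sum_mul]
      simp only [smul_mul_assoc, ← pow_succ]
      rw [Finset.smul_sum]
      simp only [smul_smul]
      have hR : ∑ m ∈ Finset.range (n + 1 + 1), qdC P (n + 1) m • y ^ m
          = qdC P (n + 1) 0 • y ^ 0
            + (∑ m ∈ Finset.Ico 1 (n + 1), qdC P (n + 1) m • y ^ m
               + qdC P (n + 1) (n + 1) • y ^ (n + 1)) := by
        rw [Finset.range_eq_Ico, Finset.sum_eq_sum_Ico_succ_bot (by omega),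
          Finset.sum_Ico_succ_top (by omega : 1 ≤ n + 1)]
      have hL1 : ∑ m ∈ Finset.range (n + 1), qdC P n m • y ^ m
          = qdC P n 0 • y ^ 0 + ∑ m ∈ Finset.Ico 1 (n + 1), qdC P n m • y ^ m := by
        rw [Finset.range_eq_Ico, Finset.sum_eq_sum_Ico_succ_bot (by omega)]
      have hL2 : ∑ m ∈ Finset.range (n + 1), (P ^ (n + 1) * qdC P n m) • y ^ (m + 1)
          = ∑ m ∈ Finset.Ico 1 (n + 1), (P ^ (n + 1) * qdC P n (m - 1)) • y ^ m
            + (P ^ (n + 1) * qdC P n n) • y ^ (n + 1) := by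
        have : ∑ m ∈ Finset.Ico 1 (n + 1 + 1), (P ^ (n + 1) * qdC P n (m - 1)) • y ^ m
            = ∑ m ∈ Finset.range (n + 1), (P ^ (n + 1) * qdC P n m) • y ^ (m + 1) := by
          rw [Finset.sum_Ico_eq_sum_range]
          simp only [Nat.add_sub_cancel]
          apply Finset.sum_congr rfl
          intro i _
          have e1 : 1 + i - 1 = i := by omega
          have e2 : 1 + i = i + 1 := by omega
          rw [e1, e2]
        rw [← this, Finset.sum_Ico_succ_top (by omega : 1 ≤ n + 1)]
        simp only [Nat.add_sub_cancel]
      rw [hL1, hL2, hR, qdC_zero P hq, qdC_zero P hq, qdC_top P hPne hq n]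
      have hmid : ∑ m ∈ Finset.Ico 1 (n + 1), qdC P (n + 1) m • y ^ m
          = ∑ m ∈ Finset.Ico 1 (n + 1),
              (qdC P n m • y ^ m - (P ^ (n + 1) * qdC P n (m - 1)) • y ^ m) := by
        apply Finset.sum_congr rfl
        intro m hm
        rw [Finset.mem_Ico] at hm
        rw [qdC_rec P hPne hq hm.1 (by omega), sub_smul]
      rw [hmid, Finset.sum_sub_distrib, neg_smul]
      abel
  intro n
  rw [key n, Finset.range_eq_Ico, Finset.sum_eq_sum_Ico_succ_bot (Nat.succ_pos n),
    Nat.succ_eq_add_one, Finset.Ico_add_one_right_eq_Icc, qdC_zero P hq]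
  simp only [pow_zero, one_smul]
  rfl
end

section
/- The infinite-dimensional representation ρ_∞ of the quantum disc algebra O(D_p) (0 < p < 1) is faithful; equivalently, the elements xⁿ(1 − x x*)ᵐ for n ∈ ℤ (negative powers meaning (x*)^{−n}) and m ∈ ℕ₀ are linearly independent in O(D_p), hence form a linear basis. -/
/-- The defining relation of the quantum disc: `x* x = p·x x* + (1 − p)`.
Generator `true` is `x`, generator `false` is `x*`. -/
inductive DiscRel (p : ℝ) : FreeAlgebra ℂ Bool → FreeAlgebra ℂ Bool → Prop
  | rel : DiscRel p (FreeAlgebra.ι ℂ false * FreeAlgebra.ι ℂ true)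
      ((p : ℂ) • (FreeAlgebra.ι ℂ true * FreeAlgebra.ι ℂ false) +
        algebraMap ℂ (FreeAlgebra ℂ Bool) (1 - (p : ℝ)))

/-- The coordinate algebra `O(D_p)` of the quantum disc. -/
def ODisc (p : ℝ) := RingQuot (DiscRel p)

noncomputable instance (p : ℝ) : Ring (ODisc p) := by unfold ODisc; infer_instance
noncomputable instance (p : ℝ) : Algebra ℂ (ODisc p) := by unfold ODisc; infer_instance

/-- The generator `x` of `O(D_p)`. -/
noncomputable def discX (p : ℝ) : ODisc p :=
  RingQuot.mkAlgHom ℂ (DiscRel p) (FreeAlgebra.ι ℂ true)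

/-- The generator `x*` of `O(D_p)`. -/
noncomputable def discXs (p : ℝ) : ODisc p :=
  RingQuot.mkAlgHom ℂ (DiscRel p) (FreeAlgebra.ι ℂ false)

noncomputable instance (p : ℝ) : AddSubgroupClass (Submodule ℂ (ODisc p)) (ODisc p) :=
  @Submodule.addSubgroupClass ℂ (ODisc p) _ _ Algebra.toModule

/-! ### Auxiliary algebra-side lemmas -/

/-- `u = 1 - x x*`. -/
noncomputable def uD (p : ℝ) : ODisc p := 1 - discX p * discXs p

theorem disc_rel (p : ℝ) : discXs p * discX p =
    (p : ℂ) • (discX p * discXs p) + algebraMap ℂ (ODisc p) ((1 : ℂ) - (p : ℂ)) := by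
  have h := RingQuot.mkAlgHom_rel ℂ (DiscRel.rel (p := p))
  simp only [map_mul, map_add, map_smul, AlgHom.commutes] at h
  exact h

theorem disc_YX (p : ℝ) : discXs p * discX p = 1 - (p : ℂ) • uD p := by
  rw [disc_rel, uD, Algebra.algebraMap_eq_smul_one]
  rw [smul_sub]; simp only [Algebra.smul_def, map_sub, map_one]; noncomm_ring

theorem disc_uX (p : ℝ) : uD p * discX p = (p : ℂ) • (discX p * uD p) := by
  have h : uD p * discX p = discX p - discX p * (discXs p * discX p) := by
    rw [uD]; noncomm_ring
  rw [h, disc_YX, mul_sub, mul_one, mul_smul_comm, sub_sub_cancel]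

theorem disc_Yu (p : ℝ) : discXs p * uD p = (p : ℂ) • (uD p * discXs p) := by
  have h : discXs p * uD p = discXs p - (discXs p * discX p) * discXs p := by
    rw [uD]; noncomm_ring
  rw [h, disc_YX, sub_mul, one_mul, smul_mul_assoc, sub_sub_cancel]

theorem disc_uXpow (p : ℝ) (n : ℕ) :
    uD p * discX p ^ n = ((p : ℂ) ^ n) • (discX p ^ n * uD p) := by
  induction n with
  | zero => simp
  | succ n ih =>
    rw [pow_succ' (discX p), ← mul_assoc, disc_uX, smul_mul_assoc, mul_assoc, ih,
      mul_smul_comm, smul_smul, ← mul_assoc, ← pow_succ' (discX p), ← pow_succ']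

theorem disc_Ypowu (p : ℝ) (n : ℕ) :
    discXs p ^ n * uD p = ((p : ℂ) ^ n) • (uD p * discXs p ^ n) := by
  induction n with
  | zero => simp
  | succ n ih =>
    calc discXs p ^ (n+1) * uD p = discXs p ^ n * (discXs p * uD p) := by
          rw [pow_succ, mul_assoc]
      _ = (p:ℂ) • ((discXs p ^ n * uD p) * discXs p) := by
          rw [disc_Yu, mul_smul_comm, mul_assoc]
      _ = (p:ℂ) • (((p:ℂ)^n • (uD p * discXs p ^ n)) * discXs p) := by rw [ih]
      _ = ((p:ℂ)^(n+1)) • (uD p * discXs p ^ (n+1)) := by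
          rw [smul_mul_assoc, smul_smul, mul_assoc, ← pow_succ (discXs p), ← pow_succ' ((p:ℂ))]

theorem disc_uYpow (p : ℝ) (hp0 : 0 < p) (n : ℕ) :
    uD p * discXs p ^ n = (((p : ℂ) ^ n)⁻¹) • (discXs p ^ n * uD p) := by
  have hne : ((p : ℂ) ^ n) ≠ 0 := pow_ne_zero _ (by exact_mod_cast hp0.ne')
  rw [disc_Ypowu, smul_smul, inv_mul_cancel₀ hne, one_smul]

/-- The basis family. -/
noncomputable def eb (p : ℝ) : ℤ × ℕ → ODisc p := fun nm =>
  (if 0 ≤ nm.1 then discX p ^ nm.1.toNat else discXs p ^ (-nm.1).toNat) *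
    (1 - discX p * discXs p) ^ nm.2

theorem eb_nonneg (p : ℝ) (n m : ℕ) : eb p ((n : ℤ), m) = discX p ^ n * uD p ^ m := by
  simp [eb, uD]

theorem eb_neg (p : ℝ) (n m : ℕ) : eb p (-(n : ℤ), m) = discXs p ^ n * uD p ^ m := by
  cases n with
  | zero => simp [eb, uD]
  | succ k =>
    simp only [eb]
    rw [if_neg (by omega : ¬ (0:ℤ) ≤ -((k+1 : ℕ):ℤ))]
    rw [show (-(-((k+1 : ℕ):ℤ))).toNat = k+1 by omega]
    rfl

/-! ### Spanning -/

theorem mem_span_eb_X (p : ℝ) (n m : ℕ) :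
    discX p ^ n * uD p ^ m ∈ Submodule.span ℂ (Set.range (eb p)) :=
  Submodule.subset_span ⟨((n : ℤ), m), eb_nonneg p n m⟩

theorem mem_span_eb_Y (p : ℝ) (n m : ℕ) :
    discXs p ^ n * uD p ^ m ∈ Submodule.span ℂ (Set.range (eb p)) :=
  Submodule.subset_span ⟨(-(n : ℤ), m), eb_neg p n m⟩

theorem mulX_mem (p : ℝ) (hp0 : 0 < p) {a : ODisc p}
    (ha : a ∈ Submodule.span ℂ (Set.range (eb p))) :
    discX p * a ∈ Submodule.span ℂ (Set.range (eb p)) := by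
  induction ha using Submodule.span_induction with
  | mem b hb =>
    obtain ⟨⟨n, m⟩, rfl⟩ := hb
    by_cases h0 : 0 ≤ n
    · lift n to ℕ using h0
      rw [eb_nonneg, ← mul_assoc, ← pow_succ']
      exact mem_span_eb_X p (n + 1) m
    · obtain ⟨j, rfl⟩ : ∃ j : ℕ, n = -((j : ℤ) + 1) := ⟨(-n).toNat - 1, by omega⟩
      have hj : (-((j : ℤ) + 1)) = -((j + 1 : ℕ) : ℤ) := by push_cast; ring
      rw [hj, eb_neg]
      have key : discX p * (discXs p ^ (j + 1) * uD p ^ m) =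
          discXs p ^ j * uD p ^ m -
            (((p : ℂ) ^ j)⁻¹) • (discXs p ^ j * uD p ^ (m + 1)) := by
        have hXY : discX p * discXs p = 1 - uD p := by rw [uD]; noncomm_ring
        calc discX p * (discXs p ^ (j + 1) * uD p ^ m)
            = (discX p * discXs p) * (discXs p ^ j * uD p ^ m) := by
              rw [pow_succ' (discXs p)]; noncomm_ring
          _ = discXs p ^ j * uD p ^ m - (uD p * discXs p ^ j) * uD p ^ m := by
              rw [hXY, sub_mul, one_mul, mul_assoc]
          _ = discXs p ^ j * uD p ^ m -
                (((p : ℂ) ^ j)⁻¹) • (discXs p ^ j * uD p ^ (m + 1)) := by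
              rw [disc_uYpow p hp0, smul_mul_assoc, mul_assoc, ← pow_succ']
      rw [key]
      exact sub_mem (mem_span_eb_Y p j m)
        (Submodule.smul_mem _ _ (mem_span_eb_Y p j (m + 1)))
  | zero => simpa using Submodule.zero_mem _
  | add b c _ _ hb hc => rw [mul_add]; exact add_mem hb hc
  | smul c b _ hb => rw [mul_smul_comm]; exact Submodule.smul_mem _ _ hb

theorem mulY_mem (p : ℝ) {a : ODisc p}
    (ha : a ∈ Submodule.span ℂ (Set.range (eb p))) :
    discXs p * a ∈ Submodule.span ℂ (Set.range (eb p)) := by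
  induction ha using Submodule.span_induction with
  | mem b hb =>
    obtain ⟨⟨n, m⟩, rfl⟩ := hb
    by_cases h0 : 0 < n
    · obtain ⟨j, rfl⟩ : ∃ j : ℕ, n = ((j : ℤ) + 1) := ⟨n.toNat - 1, by omega⟩
      have hj : ((j : ℤ) + 1) = ((j + 1 : ℕ) : ℤ) := by push_cast; ring
      rw [hj, eb_nonneg]
      have key : discXs p * (discX p ^ (j + 1) * uD p ^ m) =
          discX p ^ j * uD p ^ m - ((p : ℂ) ^ (j + 1)) • (discX p ^ j * uD p ^ (m + 1)) := by
        calc discXs p * (discX p ^ (j + 1) * uD p ^ m)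
            = (discXs p * discX p) * (discX p ^ j * uD p ^ m) := by
              rw [pow_succ' (discX p)]; noncomm_ring
          _ = discX p ^ j * uD p ^ m - (p : ℂ) • (uD p * (discX p ^ j * uD p ^ m)) := by
              rw [disc_YX, sub_mul, one_mul, smul_mul_assoc]
          _ = discX p ^ j * uD p ^ m -
                ((p : ℂ) ^ (j + 1)) • (discX p ^ j * uD p ^ (m + 1)) := by
              rw [← mul_assoc, disc_uXpow, smul_mul_assoc, smul_smul, mul_assoc,
                ← pow_succ' (uD p), ← pow_succ' ((p:ℂ))]
      rw [key]
      exact sub_mem (mem_span_eb_X p j m)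
        (Submodule.smul_mem _ _ (mem_span_eb_X p j (m + 1)))
    · have hn : n = -(((-n).toNat : ℕ) : ℤ) := by omega
      rw [hn, eb_neg, ← mul_assoc, ← pow_succ']
      exact mem_span_eb_Y p ((-n).toNat + 1) m
  | zero => simpa using Submodule.zero_mem _
  | add b c _ _ hb hc => rw [mul_add]; exact add_mem hb hc
  | smul c b _ hb => rw [mul_smul_comm]; exact Submodule.smul_mem _ _ hb

theorem one_mem_span_eb (p : ℝ) : (1 : ODisc p) ∈ Submodule.span ℂ (Set.range (eb p)) := by
  simpa using mem_span_eb_X p 0 0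

/-- The quotient map as an `AlgHom` into `ODisc`. -/
noncomputable def mkD (p : ℝ) : FreeAlgebra ℂ Bool →ₐ[ℂ] ODisc p :=
  RingQuot.mkAlgHom ℂ (DiscRel p)

theorem span_eb_top (p : ℝ) (hp0 : 0 < p) :
    Submodule.span ℂ (Set.range (eb p)) = ⊤ := by
  rw [Submodule.eq_top_iff']
  intro z
  obtain ⟨a, rfl⟩ := RingQuot.mkAlgHom_surjective ℂ (DiscRel p) z
  have H : ∀ a : FreeAlgebra ℂ Bool, ∀ b ∈ Submodule.span ℂ (Set.range (eb p)),
      mkD p a * b ∈ Submodule.span ℂ (Set.range (eb p)) := by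
    intro a
    induction a using FreeAlgebra.induction with
    | grade0 r =>
      intro b hb
      rw [AlgHom.commutes, ← Algebra.smul_def]
      exact Submodule.smul_mem _ _ hb
    | grade1 x =>
      intro b hb
      cases x
      · rw [show mkD p (FreeAlgebra.ι ℂ false) = discXs p from rfl]
        exact mulY_mem p hb
      · rw [show mkD p (FreeAlgebra.ι ℂ true) = discX p from rfl]
        exact mulX_mem p hp0 hb
    | mul a₁ a₂ h₁ h₂ =>
      intro b hb
      rw [map_mul, mul_assoc]
      exact h₁ _ (h₂ _ hb)
    | add a₁ a₂ h₁ h₂ =>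
      intro b hb
      rw [map_add, add_mul]
      exact add_mem (h₁ _ hb) (h₂ _ hb)
  have := H a 1 (one_mem_span_eb p)
  rw [mul_one] at this
  exact this

/-! ### The representation -/

noncomputable def opX : (ℕ →₀ ℂ) →ₗ[ℂ] (ℕ →₀ ℂ) := Finsupp.lmapDomain ℂ ℂ (· + 1)

noncomputable def shv (p : ℝ) : ℕ → (ℕ →₀ ℂ)
  | 0 => 0
  | k+1 => (1 - (p:ℂ)^(k+1)) • Finsupp.single k 1

noncomputable def opY (p : ℝ) : (ℕ →₀ ℂ) →ₗ[ℂ] (ℕ →₀ ℂ) :=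
  Finsupp.lsum ℂ fun n => LinearMap.toSpanSingleton ℂ _ (shv p n)

noncomputable def opU (p : ℝ) : Module.End ℂ (ℕ →₀ ℂ) := 1 - opX * opY p

lemma opX_single (n : ℕ) (c : ℂ) : opX (Finsupp.single n c) = Finsupp.single (n+1) c := by
  simp [opX, Finsupp.mapDomain_single]

lemma opY_single (p : ℝ) (n : ℕ) (c : ℂ) : opY p (Finsupp.single n c) = c • shv p n := by
  simp [opY, LinearMap.toSpanSingleton_apply]

lemma opRel (p : ℝ) : (opY p) * opX =
    (p:ℂ) • (opX * opY p) + algebraMap ℂ (Module.End ℂ (ℕ →₀ ℂ)) (1 - (p:ℂ)) := by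
  apply Finsupp.lhom_ext (fun n c => ?_)
  simp only [Module.End.mul_apply, LinearMap.add_apply, LinearMap.smul_apply,
    Module.algebraMap_end_apply, opX_single, opY_single]
  cases n with
  | zero =>
    simp only [shv, map_smul, smul_zero, map_zero, opX_single, Finsupp.smul_single', zero_add,
      mul_one, pow_one]
    exact congrArg (Finsupp.single 0) (by ring)
  | succ k =>
    simp only [shv, map_smul, opX_single, Finsupp.smul_single', mul_one, ← Finsupp.single_add]
    exact congrArg (Finsupp.single (k+1)) (by ring)

/-- The representation `ρ∞`. -/
noncomputable def rho (p : ℝ) : ODisc p →ₐ[ℂ] Module.End ℂ (ℕ →₀ ℂ) :=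
  RingQuot.liftAlgHom ℂ ⟨FreeAlgebra.lift ℂ (fun b => if b then opX else opY p), by
    rintro _ _ ⟨⟩
    simp only [map_mul, map_add, map_smul, FreeAlgebra.lift_ι_apply, AlgHom.commutes,
      if_true, if_false]
    push_cast
    exact opRel p⟩

lemma rho_mk (p : ℝ) (a : FreeAlgebra ℂ Bool) :
    rho p (RingQuot.mkAlgHom ℂ (DiscRel p) a) =
      FreeAlgebra.lift ℂ (fun b => if b then opX else opY p) a :=
  RingQuot.liftAlgHom_mkAlgHom_apply _ _ _ _

lemma rho_X (p : ℝ) : rho p (discX p) = opX := by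
  rw [discX, rho_mk, FreeAlgebra.lift_ι_apply, if_pos rfl]

lemma rho_Y (p : ℝ) : rho p (discXs p) = opY p := by
  rw [discXs, rho_mk, FreeAlgebra.lift_ι_apply]
  simp

lemma rho_u (p : ℝ) : rho p (uD p) = opU p := by
  rw [uD, opU, map_sub, map_one, map_mul, rho_X, rho_Y]

/-! ### Action on basis vectors -/

lemma opX_pow_single (n k : ℕ) :
    (opX ^ n) (Finsupp.single k 1) = Finsupp.single (k + n) (1 : ℂ) := by
  induction n generalizing k with
  | zero => simp
  | succ n ih =>
    rw [pow_succ', Module.End.mul_apply, ih, opX_single]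
    rfl

lemma opU_single (p : ℝ) (k : ℕ) :
    opU p (Finsupp.single k 1) = ((p:ℂ)^k) • Finsupp.single k (1 : ℂ) := by
  cases k with
  | zero =>
    simp [opU, opY_single, shv]
  | succ k =>
    simp only [opU, LinearMap.sub_apply, Module.End.one_apply, Module.End.mul_apply,
      opY_single, shv, one_smul, map_smul, opX_single, Finsupp.smul_single', mul_one]
    rw [← Finsupp.single_sub]
    exact congrArg (Finsupp.single (k+1)) (by ring)

lemma opU_pow_single (p : ℝ) (m k : ℕ) :
    (opU p ^ m) (Finsupp.single k 1) = ((p:ℂ)^(k*m)) • Finsupp.single k (1 : ℂ) := by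
  induction m with
  | zero => simp
  | succ m ih =>
    rw [pow_succ, Module.End.mul_apply, opU_single, map_smul, ih, smul_smul,
      ← pow_add]
    congr 2
    ring

noncomputable def bcoef (p : ℝ) (j k : ℕ) : ℂ := ∏ i ∈ Finset.range j, (1 - (p:ℂ)^(k-i))

lemma opY_pow_single (p : ℝ) (j k : ℕ) (h : j ≤ k) :
    (opY p ^ j) (Finsupp.single k 1) = bcoef p j k • Finsupp.single (k - j) (1 : ℂ) := by
  induction j with
  | zero => simp [bcoef]
  | succ j ih =>
    obtain ⟨t, ht⟩ : ∃ t : ℕ, k - j = t + 1 := ⟨k - j - 1, by omega⟩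
    rw [pow_succ', Module.End.mul_apply, ih (by omega), map_smul, opY_single, one_smul, ht]
    simp only [shv]
    rw [smul_smul]
    have h1 : bcoef p j k * (1 - (p:ℂ)^(t+1)) = bcoef p (j+1) k := by
      rw [bcoef, bcoef, Finset.prod_range_succ, ht]
    rw [h1, show t = k - (j+1) by omega]

lemma bcoef_ne_zero (p : ℝ) (hp0 : 0 < p) (hp1 : p < 1) (j k : ℕ) (h : j ≤ k) :
    bcoef p j k ≠ 0 := by
  rw [bcoef]
  apply Finset.prod_ne_zero_iff.mpr
  intro i hi
  rw [Finset.mem_range] at hi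
  have h1 : k - i ≥ 1 := by omega
  have h2 : p ^ (k - i) < 1 := pow_lt_one₀ hp0.le hp1 (by omega)
  have h3 : (p:ℂ)^(k-i) ≠ 1 := by
    rw [← Complex.ofReal_pow]
    intro hc
    rw [Complex.ofReal_eq_one] at hc
    linarith
  exact sub_ne_zero.mpr (Ne.symm h3)

noncomputable def cf (p : ℝ) (n : ℤ) (k : ℕ) : ℂ :=
  if 0 ≤ n then 1 else bcoef p (-n).toNat k

lemma rho_eb_single (p : ℝ) (n : ℤ) (m k : ℕ) (hk : (-n).toNat ≤ k) :
    rho p (eb p (n, m)) (Finsupp.single k 1) =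
      (cf p n k * (p:ℂ)^(k*m)) • Finsupp.single ((k : ℤ) + n).toNat (1 : ℂ) := by
  by_cases h0 : 0 ≤ n
  · lift n to ℕ using h0
    rw [eb_nonneg, map_mul, map_pow, map_pow, rho_X, rho_u, Module.End.mul_apply,
      opU_pow_single, map_smul, opX_pow_single]
    have : ((k : ℤ) + n).toNat = k + n := by omega
    rw [this, cf, if_pos (by positivity), one_mul]
  · obtain ⟨j, rfl⟩ : ∃ j : ℕ, n = -((j : ℕ) : ℤ) := ⟨(-n).toNat, by omega⟩
    have hjk : j ≤ k := by omega
    rw [eb_neg, map_mul, map_pow, map_pow, rho_Y, rho_u, Module.End.mul_apply,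
      opU_pow_single, map_smul, opY_pow_single p j k hjk, smul_smul, cf, if_neg h0]
    rw [show (- -((j:ℕ):ℤ)).toNat = j by omega,
      show ((k : ℤ) + -((j:ℕ):ℤ)).toNat = k - j by omega, mul_comm]

theorem cf_ne_zero (p : ℝ) (hp0 : 0 < p) (hp1 : p < 1) (n : ℤ) (k : ℕ)
    (hk : (-n).toNat ≤ k) : cf p n k ≠ 0 := by
  rw [cf]
  split
  · exact one_ne_zero
  · exact bcoef_ne_zero p hp0 hp1 _ _ hk

theorem eb_linearIndependent (p : ℝ) (hp0 : 0 < p) (hp1 : p < 1) :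
    LinearIndependent ℂ (eb p) := by
  refine (@linearIndependent_iff' _ ℂ (ODisc p) _ _ Algebra.toModule (eb p)).mpr ?_
  intro s g hsum i hi
  obtain ⟨n₀, m₀⟩ := i
  set N := s.sup (fun nm => (-nm.1).toNat) with hN
  have hkn₀ : (-n₀).toNat ≤ N := Finset.le_sup (f := fun nm : ℤ × ℕ => (-nm.1).toNat) hi
  have hkey : ∀ k, N ≤ k → ∑ nm ∈ s.filter (fun nm => nm.1 = n₀),
      g nm * (((p:ℂ)^k)^nm.2) = 0 := by
    intro k hk
    have hks : ∀ nm ∈ s, (-nm.1).toNat ≤ k := fun nm h =>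
      le_trans (Finset.le_sup (f := fun nm : ℤ × ℕ => (-nm.1).toNat) h) hk
    have hsum' : ∑ nm ∈ s, g nm • eb p nm = 0 := hsum
    have h1 := congrArg (rho p) hsum'
    rw [map_zero, map_sum] at h1
    simp only [map_smul] at h1
    have h2 := congrArg (fun T : Module.End ℂ (ℕ →₀ ℂ) => T (Finsupp.single k 1)) h1
    simp only [LinearMap.sum_apply, LinearMap.smul_apply, LinearMap.zero_apply] at h2
    have h3 : ∑ nm ∈ s, (g nm * (cf p nm.1 k * (p:ℂ)^(k*nm.2))) •
        Finsupp.single ((k:ℤ)+nm.1).toNat (1:ℂ) = 0 := by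
      rw [← h2]
      apply Finset.sum_congr rfl
      intro nm hnm
      obtain ⟨n, m⟩ := nm
      rw [rho_eb_single p n m k (hks _ hnm), smul_smul]
    have h4 := congrArg (fun v : ℕ →₀ ℂ => v ((k:ℤ)+n₀).toNat) h3
    simp only [Finsupp.finset_sum_apply, Finsupp.smul_apply, Finsupp.single_apply,
      Finsupp.coe_zero, Pi.zero_apply, smul_eq_mul, mul_ite, mul_one, mul_zero] at h4
    have heq : ∑ nm ∈ s, (if ((k:ℤ) + nm.1).toNat = ((k:ℤ) + n₀).toNat
          then g nm * (cf p nm.1 k * (p:ℂ)^(k*nm.2)) else 0) =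
        ∑ nm ∈ s, (if nm.1 = n₀ then g nm * (cf p nm.1 k * (p:ℂ)^(k*nm.2)) else 0) := by
      apply Finset.sum_congr rfl
      intro nm hnm
      have h₁ := hks nm hnm
      have h₂ : (-n₀).toNat ≤ k := le_trans hkn₀ hk
      exact if_congr (by omega) rfl rfl
    rw [heq] at h4
    have h5 := h4
    rw [← Finset.sum_filter] at h5
    have h6 : cf p n₀ k * ∑ nm ∈ s.filter (fun nm => nm.1 = n₀),
        g nm * ((p:ℂ)^k)^nm.2 = 0 := by
      rw [Finset.mul_sum, ← h5]
      apply Finset.sum_congr rfl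
      intro nm hnm
      have hn : nm.1 = n₀ := (Finset.mem_filter.mp hnm).2
      rw [hn, ← pow_mul]
      ring
    exact (mul_eq_zero.mp h6).resolve_left (cf_ne_zero p hp0 hp1 n₀ k (le_trans hkn₀ hk))
  -- polynomial argument
  set Q : Polynomial ℂ := ∑ nm ∈ s.filter (fun nm => nm.1 = n₀),
    Polynomial.C (g nm) * Polynomial.X ^ nm.2 with hQdef
  have hQeval : ∀ k, N ≤ k → Q.eval ((p:ℂ)^k) = 0 := by
    intro k hk
    rw [hQdef, Polynomial.eval_finset_sum]
    simpa [Polynomial.eval_mul, Polynomial.eval_pow] using hkey k hk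
  have hpinj : Function.Injective (fun i : ℕ => ((p:ℂ)^(N+i))) := by
    intro a b hab
    simp only [← Complex.ofReal_pow, Complex.ofReal_inj] at hab
    have := (pow_right_strictAnti₀ hp0 hp1).injective hab
    omega
  have hQ : Q = 0 := by
    apply Polynomial.eq_zero_of_infinite_isRoot
    apply Set.infinite_of_injective_forall_mem hpinj
    intro a
    exact hQeval (N + a) (by omega)
  have hcoeff := congrArg (fun q : Polynomial ℂ => q.coeff m₀) hQ
  simp only [hQdef, Polynomial.finset_sum_coeff, Polynomial.coeff_C_mul,
    Polynomial.coeff_X_pow, Polynomial.coeff_zero, mul_ite, mul_one, mul_zero] at hcoeff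
  have hT : ((n₀, m₀) : ℤ × ℕ) ∈ s.filter (fun nm => nm.1 = n₀) :=
    Finset.mem_filter.mpr ⟨hi, rfl⟩
  rw [Finset.sum_eq_single ((n₀, m₀) : ℤ × ℕ)] at hcoeff
  · simpa using hcoeff
  · intro b hb hne
    have hb1 : b.1 = n₀ := (Finset.mem_filter.mp hb).2
    have hb2 : ¬ (m₀ = b.2) := by
      intro h
      exact hne (Prod.ext hb1 h.symm)
    rw [if_neg hb2]
  · intro h
    exact absurd hT h

/-- The elements `xⁿ(1 − x x*)ᵐ`, `n ∈ ℤ` (negative powers meaning `(x*)^{−n}`),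
`m ∈ ℕ`, are linearly independent in `O(D_p)` and span it, hence form a linear
basis; equivalently, the infinite-dimensional representation `ρ_∞` is faithful. -/
theorem ODisc_basis (p : ℝ) (hp0 : 0 < p) (hp1 : p < 1) :
    LinearIndependent ℂ (fun nm : ℤ × ℕ =>
      (if 0 ≤ nm.1 then discX p ^ nm.1.toNat else discXs p ^ (-nm.1).toNat) *
        (1 - discX p * discXs p) ^ nm.2) ∧
    Submodule.span ℂ (Set.range (fun nm : ℤ × ℕ =>
      (if 0 ≤ nm.1 then discX p ^ nm.1.toNat else discXs p ^ (-nm.1).toNat) *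
        (1 - discX p * discXs p) ^ nm.2)) = ⊤ :=
  ⟨eb_linearIndependent p hp0 hp1, span_eb_top p hp0⟩
end

section
/- Let H = O(U(1)) be the Hopf algebra of Laurent polynomials ℂ[u, u⁻¹] with u grouplike. Let P = O(D_p ×_θ S¹) be the algebra generated by x, h with relations h h* = h* h = 1, x*x − p x x* = 1 − p, h x = e^{iθ} x h, with right H-coaction ρ(x) = x ⊗ 1, ρ(h) = h ⊗ u. Then the coinvariant subalgebra P^{co H} is exactly the subalgebra generated by x and x* (isomorphic to O(D_p)). -/
open scoped TensorProduct

/-- Defining relations of the quantum solid torus `O(D_p ×_θ S¹)`.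
Generators: `0 = x`, `1 = x*`, `2 = h`, `3 = h⁻¹ = h*`. -/
inductive SolidTorusRel (p θ : ℝ) : FreeAlgebra ℂ (Fin 4) → FreeAlgebra ℂ (Fin 4) → Prop
  | h_hs : SolidTorusRel p θ (FreeAlgebra.ι ℂ 2 * FreeAlgebra.ι ℂ 3) 1
  | hs_h : SolidTorusRel p θ (FreeAlgebra.ι ℂ 3 * FreeAlgebra.ι ℂ 2) 1
  | disc : SolidTorusRel p θ (FreeAlgebra.ι ℂ 1 * FreeAlgebra.ι ℂ 0)
      ((p : ℂ) • (FreeAlgebra.ι ℂ 0 * FreeAlgebra.ι ℂ 1) +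
        algebraMap ℂ (FreeAlgebra ℂ (Fin 4)) (1 - (p : ℝ)))
  | h_x : SolidTorusRel p θ (FreeAlgebra.ι ℂ 2 * FreeAlgebra.ι ℂ 0)
      (Complex.exp (θ * Complex.I) • (FreeAlgebra.ι ℂ 0 * FreeAlgebra.ι ℂ 2))
  | h_xs : SolidTorusRel p θ (FreeAlgebra.ι ℂ 2 * FreeAlgebra.ι ℂ 1)
      (Complex.exp (-(θ * Complex.I)) • (FreeAlgebra.ι ℂ 1 * FreeAlgebra.ι ℂ 2))

/-- The coordinate algebra of the quantum solid torus. -/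
def SolidTorus (p θ : ℝ) := RingQuot (SolidTorusRel p θ)

noncomputable instance (p θ : ℝ) : Ring (SolidTorus p θ) := by
  unfold SolidTorus; infer_instance
noncomputable instance (p θ : ℝ) : Algebra ℂ (SolidTorus p θ) := by
  unfold SolidTorus; infer_instance

noncomputable def stX (p θ : ℝ) : SolidTorus p θ :=
  RingQuot.mkAlgHom ℂ (SolidTorusRel p θ) (FreeAlgebra.ι ℂ 0)
noncomputable def stXs (p θ : ℝ) : SolidTorus p θ :=
  RingQuot.mkAlgHom ℂ (SolidTorusRel p θ) (FreeAlgebra.ι ℂ 1)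
noncomputable def stH (p θ : ℝ) : SolidTorus p θ :=
  RingQuot.mkAlgHom ℂ (SolidTorusRel p θ) (FreeAlgebra.ι ℂ 2)
noncomputable def stHs (p θ : ℝ) : SolidTorus p θ :=
  RingQuot.mkAlgHom ℂ (SolidTorusRel p θ) (FreeAlgebra.ι ℂ 3)

/-! ### Auxiliary material -/

namespace SolidTorusAux

variable (p θ : ℝ)

noncomputable abbrev e : ℂ := Complex.exp (θ * Complex.I)
noncomputable abbrev einv : ℂ := Complex.exp (-(θ * Complex.I))

lemma e_mul_einv : e θ * einv θ = 1 := by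
  rw [e, einv, ← Complex.exp_add, add_neg_cancel, Complex.exp_zero]

lemma einv_mul_e : einv θ * e θ = 1 := by
  rw [e, einv, ← Complex.exp_add, neg_add_cancel, Complex.exp_zero]

lemma st_h_hs : stH p θ * stHs p θ = 1 := by
  have := RingQuot.mkAlgHom_rel ℂ (SolidTorusRel.h_hs (p := p) (θ := θ))
  rw [map_mul, map_one] at this; exact this

lemma st_hs_h : stHs p θ * stH p θ = 1 := by
  have := RingQuot.mkAlgHom_rel ℂ (SolidTorusRel.hs_h (p := p) (θ := θ))
  rw [map_mul, map_one] at this; exact this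

lemma st_h_x : stH p θ * stX p θ = e θ • (stX p θ * stH p θ) := by
  have := RingQuot.mkAlgHom_rel ℂ (SolidTorusRel.h_x (p := p) (θ := θ))
  rw [map_mul, map_smul, map_mul] at this; exact this

lemma st_h_xs : stHs p θ * stH p θ = 1 ∧
    stH p θ * stXs p θ = einv θ • (stXs p θ * stH p θ) := by
  constructor
  · exact st_hs_h p θ
  · have := RingQuot.mkAlgHom_rel ℂ (SolidTorusRel.h_xs (p := p) (θ := θ))
    rw [map_mul, map_smul, map_mul] at this; exact this

lemma st_h_xs' : stH p θ * stXs p θ = einv θ • (stXs p θ * stH p θ) :=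
  (st_h_xs p θ).2

lemma st_x_h : stX p θ * stH p θ = einv θ • (stH p θ * stX p θ) := by
  rw [st_h_x, smul_smul, einv_mul_e, one_smul]

lemma st_xs_h : stXs p θ * stH p θ = e θ • (stH p θ * stXs p θ) := by
  rw [st_h_xs', smul_smul, e_mul_einv, one_smul]

lemma st_hs_x : stHs p θ * stX p θ = einv θ • (stX p θ * stHs p θ) := by
  calc stHs p θ * stX p θ
      = stHs p θ * stX p θ * (stH p θ * stHs p θ) := by rw [st_h_hs p θ, mul_one]
    _ = stHs p θ * (stX p θ * stH p θ) * stHs p θ := by noncomm_ring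
    _ = stHs p θ * (einv θ • (stH p θ * stX p θ)) * stHs p θ := by rw [st_x_h]
    _ = einv θ • (stHs p θ * stH p θ * (stX p θ * stHs p θ)) := by
        rw [mul_smul_comm, smul_mul_assoc]; congr 1; noncomm_ring
    _ = einv θ • (stX p θ * stHs p θ) := by rw [st_hs_h p θ, one_mul]

lemma st_hs_xs : stHs p θ * stXs p θ = e θ • (stXs p θ * stHs p θ) := by
  calc stHs p θ * stXs p θ
      = stHs p θ * stXs p θ * (stH p θ * stHs p θ) := by rw [st_h_hs p θ, mul_one]
    _ = stHs p θ * (stXs p θ * stH p θ) * stHs p θ := by noncomm_ring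
    _ = stHs p θ * (e θ • (stH p θ * stXs p θ)) * stHs p θ := by rw [st_xs_h]
    _ = e θ • (stHs p θ * stH p θ * (stXs p θ * stHs p θ)) := by
        rw [mul_smul_comm, smul_mul_assoc]; congr 1; noncomm_ring
    _ = e θ • (stXs p θ * stHs p θ) := by rw [st_hs_h p θ, one_mul]

/-- The invertible element `h` as a unit. -/
noncomputable def stHU : (SolidTorus p θ)ˣ :=
  ⟨stH p θ, stHs p θ, st_h_hs p θ, st_hs_h p θ⟩

/-- Integer powers of `h`. -/
noncomputable def hpow (n : ℤ) : SolidTorus p θ := ((stHU p θ) ^ n : (SolidTorus p θ)ˣ)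

lemma hpow_zero : hpow p θ 0 = 1 := by simp [hpow]

lemma hpow_one : hpow p θ 1 = stH p θ := by simp [hpow]; rfl

lemma hpow_neg_one : hpow p θ (-1) = stHs p θ := by simp [hpow]; rfl

lemma hpow_add (m n : ℤ) : hpow p θ (m + n) = hpow p θ m * hpow p θ n := by
  simp [hpow, zpow_add]

/-- The quantum disc subalgebra. -/
noncomputable abbrev discA : Subalgebra ℂ (SolidTorus p θ) :=
  Algebra.adjoin ℂ {stX p θ, stXs p θ}

lemma stX_mem : stX p θ ∈ discA p θ :=
  Algebra.subset_adjoin (Set.mem_insert _ _)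

lemma stXs_mem : stXs p θ ∈ discA p θ :=
  Algebra.subset_adjoin (Set.mem_insert_of_mem _ rfl)

lemma conj_h {b : SolidTorus p θ} (hb : b ∈ discA p θ) :
    ∃ c ∈ discA p θ, stH p θ * b = c * stH p θ := by
  induction hb using Algebra.adjoin_induction with
  | mem y hy =>
    simp only [Set.mem_insert_iff, Set.mem_singleton_iff] at hy
    rcases hy with rfl | rfl
    · exact ⟨e θ • stX p θ, Subalgebra.smul_mem _ (stX_mem p θ) _,
        by rw [st_h_x, smul_mul_assoc]⟩
    · exact ⟨einv θ • stXs p θ, Subalgebra.smul_mem _ (stXs_mem p θ) _,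
        by rw [st_h_xs', smul_mul_assoc]⟩
  | algebraMap r =>
    exact ⟨algebraMap ℂ _ r, Subalgebra.algebraMap_mem _ r, (Algebra.commutes r _).symm⟩
  | add u v hu hv ihu ihv =>
    obtain ⟨c, hc, ec⟩ := ihu; obtain ⟨d, hd, ed⟩ := ihv
    exact ⟨c + d, add_mem hc hd, by rw [mul_add, ec, ed, add_mul]⟩
  | mul u v hu hv ihu ihv =>
    obtain ⟨c, hc, ec⟩ := ihu; obtain ⟨d, hd, ed⟩ := ihv
    refine ⟨c * d, mul_mem hc hd, ?_⟩
    calc stH p θ * (u * v) = stH p θ * u * v := by noncomm_ring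
      _ = c * (stH p θ * v) := by rw [ec]; noncomm_ring
      _ = c * (d * stH p θ) := by rw [ed]
      _ = c * d * stH p θ := by noncomm_ring

lemma conj_hs {b : SolidTorus p θ} (hb : b ∈ discA p θ) :
    ∃ c ∈ discA p θ, stHs p θ * b = c * stHs p θ := by
  induction hb using Algebra.adjoin_induction with
  | mem y hy =>
    simp only [Set.mem_insert_iff, Set.mem_singleton_iff] at hy
    rcases hy with rfl | rfl
    · exact ⟨einv θ • stX p θ, Subalgebra.smul_mem _ (stX_mem p θ) _,
        by rw [st_hs_x, smul_mul_assoc]⟩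
    · exact ⟨e θ • stXs p θ, Subalgebra.smul_mem _ (stXs_mem p θ) _,
        by rw [st_hs_xs, smul_mul_assoc]⟩
  | algebraMap r =>
    exact ⟨algebraMap ℂ _ r, Subalgebra.algebraMap_mem _ r, (Algebra.commutes r _).symm⟩
  | add u v hu hv ihu ihv =>
    obtain ⟨c, hc, ec⟩ := ihu; obtain ⟨d, hd, ed⟩ := ihv
    exact ⟨c + d, add_mem hc hd, by rw [mul_add, ec, ed, add_mul]⟩
  | mul u v hu hv ihu ihv =>
    obtain ⟨c, hc, ec⟩ := ihu; obtain ⟨d, hd, ed⟩ := ihv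
    refine ⟨c * d, mul_mem hc hd, ?_⟩
    calc stHs p θ * (u * v) = stHs p θ * u * v := by noncomm_ring
      _ = c * (stHs p θ * v) := by rw [ec]; noncomm_ring
      _ = c * (d * stHs p θ) := by rw [ed]
      _ = c * d * stHs p θ := by noncomm_ring

lemma conj_hpow (n : ℤ) {b : SolidTorus p θ} (hb : b ∈ discA p θ) :
    ∃ c ∈ discA p θ, hpow p θ n * b = c * hpow p θ n := by
  induction n using Int.induction_on with
  | zero => exact ⟨b, hb, by rw [hpow_zero, one_mul, mul_one]⟩
  | succ k ih =>
    obtain ⟨c, hc, ec⟩ := ih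
    obtain ⟨d, hd, ed⟩ := conj_h p θ hc
    refine ⟨d, hd, ?_⟩
    have h1 : hpow p θ (k + 1) = stH p θ * hpow p θ k := by
      rw [add_comm, hpow_add, hpow_one]
    calc hpow p θ (k + 1) * b = stH p θ * (hpow p θ k * b) := by rw [h1]; noncomm_ring
      _ = stH p θ * (c * hpow p θ k) := by rw [ec]
      _ = (stH p θ * c) * hpow p θ k := by noncomm_ring
      _ = (d * stH p θ) * hpow p θ k := by rw [ed]
      _ = d * hpow p θ (k + 1) := by rw [h1]; noncomm_ring
  | pred k ih =>
    obtain ⟨c, hc, ec⟩ := ih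
    obtain ⟨d, hd, ed⟩ := conj_hs p θ hc
    refine ⟨d, hd, ?_⟩
    have h1 : hpow p θ (-(k : ℤ) - 1) = stHs p θ * hpow p θ (-(k : ℤ)) := by
      rw [sub_eq_add_neg, add_comm, hpow_add, hpow_neg_one]
    calc hpow p θ (-(k : ℤ) - 1) * b = stHs p θ * (hpow p θ (-(k : ℤ)) * b) := by
          rw [h1]; noncomm_ring
      _ = stHs p θ * (c * hpow p θ (-(k : ℤ))) := by rw [ec]
      _ = (stHs p θ * c) * hpow p θ (-(k : ℤ)) := by noncomm_ring
      _ = (d * stHs p θ) * hpow p θ (-(k : ℤ)) := by rw [ed]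
      _ = d * hpow p θ (-(k : ℤ) - 1) := by rw [h1]; noncomm_ring

section

noncomputable def stModule : @Module ℂ (SolidTorus p θ) _ NonUnitalNonAssocSemiring.toAddCommMonoid :=
  Algebra.toModule

attribute [local instance] stModule

/-- The `n`-th spectral subspace `A · hⁿ`. -/
noncomputable def Wmod (n : ℤ) : Submodule ℂ (SolidTorus p θ) :=
  (Subalgebra.toSubmodule (discA p θ)).map (LinearMap.mulRight ℂ (hpow p θ n))

lemma mem_Wmod {n : ℤ} {s : SolidTorus p θ} :
    s ∈ Wmod p θ n ↔ ∃ a ∈ discA p θ, a * hpow p θ n = s := by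
  exact Iff.rfl

end

lemma Wmod_mul {m n : ℤ} {s t : SolidTorus p θ} (hs : s ∈ Wmod p θ m)
    (ht : t ∈ Wmod p θ n) : s * t ∈ Wmod p θ (m + n) := by
  obtain ⟨a, ha, rfl⟩ := (mem_Wmod p θ).mp hs
  obtain ⟨b, hb, rfl⟩ := (mem_Wmod p θ).mp ht
  obtain ⟨c, hc, ec⟩ := conj_hpow p θ m hb
  refine (mem_Wmod p θ).mpr ⟨a * c, mul_mem ha hc, ?_⟩
  calc a * c * hpow p θ (m + n) = a * (c * hpow p θ m) * hpow p θ n := by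
        rw [hpow_add]; noncomm_ring
    _ = a * (hpow p θ m * b) * hpow p θ n := by rw [ec]
    _ = a * hpow p θ m * (b * hpow p θ n) := by noncomm_ring

lemma mul_mem_S {s t : SolidTorus p θ} (hs : s ∈ ⨆ n, Wmod p θ n)
    (ht : t ∈ ⨆ n, Wmod p θ n) : s * t ∈ ⨆ n, Wmod p θ n := by
  refine Submodule.iSup_induction (motive := fun s => s * t ∈ ⨆ n, Wmod p θ n) _ hs ?_ ?_ ?_
  · intro m u hu
    refine Submodule.iSup_induction (motive := fun t => u * t ∈ ⨆ n, Wmod p θ n) _ ht ?_ ?_ ?_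
    · intro n v hv
      exact Submodule.mem_iSup_of_mem (m + n) (Wmod_mul p θ hu hv)
    · show u * 0 ∈ _; rw [mul_zero]; exact zero_mem _
    · intro a b ha hb; show u * (a + b) ∈ _; rw [mul_add]; exact add_mem ha hb
  · show (0 : SolidTorus p θ) * t ∈ _; rw [zero_mul]; exact zero_mem _
  · intro a b ha hb; show (a + b) * t ∈ _; rw [add_mul]; exact add_mem ha hb

lemma mem_S (pp : SolidTorus p θ) : pp ∈ ⨆ n, Wmod p θ n := by
  obtain ⟨y, rfl⟩ := RingQuot.mkAlgHom_surjective ℂ (SolidTorusRel p θ) pp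
  induction y using FreeAlgebra.induction with
  | grade0 r =>
    rw [AlgHom.commutes]
    exact Submodule.mem_iSup_of_mem 0 ((mem_Wmod p θ).mpr
      ⟨algebraMap ℂ _ r, Subalgebra.algebraMap_mem _ r, by rw [hpow_zero, mul_one]; rfl⟩)
  | grade1 i =>
    fin_cases i
    · exact Submodule.mem_iSup_of_mem 0 ((mem_Wmod p θ).mpr
        ⟨stX p θ, stX_mem p θ, by rw [hpow_zero, mul_one]; rfl⟩)
    · exact Submodule.mem_iSup_of_mem 0 ((mem_Wmod p θ).mpr
        ⟨stXs p θ, stXs_mem p θ, by rw [hpow_zero, mul_one]; rfl⟩)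
    · exact Submodule.mem_iSup_of_mem 1 ((mem_Wmod p θ).mpr
        ⟨1, one_mem _, by rw [hpow_one, one_mul]; rfl⟩)
    · exact Submodule.mem_iSup_of_mem (-1) ((mem_Wmod p θ).mpr
        ⟨1, one_mem _, by rw [hpow_neg_one, one_mul]; rfl⟩)
  | mul a b ha hb => rw [map_mul]; exact mul_mem_S p θ ha hb
  | add a b ha hb => rw [map_add]; exact add_mem ha hb

variable {ρ : SolidTorus p θ →ₐ[ℂ] SolidTorus p θ ⊗[ℂ] LaurentPolynomial ℂ}

lemma tmm (a b : SolidTorus p θ) (x y : LaurentPolynomial ℂ) :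
    (a ⊗ₜ[ℂ] x) * (b ⊗ₜ[ℂ] y) = (a * b) ⊗ₜ[ℂ] (x * y) := by
  exact Algebra.TensorProduct.tmul_mul_tmul (R := ℂ) (A := RingQuot (SolidTorusRel p θ)) a b x y

lemma rho_disc (hx : ρ (stX p θ) = stX p θ ⊗ₜ[ℂ] 1)
    (hxs : ρ (stXs p θ) = stXs p θ ⊗ₜ[ℂ] 1)
    {b : SolidTorus p θ} (hb : b ∈ discA p θ) : ρ b = b ⊗ₜ[ℂ] 1 := by
  induction hb using Algebra.adjoin_induction with
  | mem y hy =>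
    simp only [Set.mem_insert_iff, Set.mem_singleton_iff] at hy
    rcases hy with rfl | rfl
    · exact hx
    · exact hxs
  | algebraMap r => rw [AlgHom.commutes, Algebra.TensorProduct.algebraMap_apply]
  | add u v hu hv ihu ihv => rw [map_add, ihu, ihv, TensorProduct.add_tmul]
  | mul u v hu hv ihu ihv =>
    rw [map_mul, ihu, ihv, tmm p θ, mul_one]

lemma rho_hpow (hh : ρ (stH p θ) = stH p θ ⊗ₜ[ℂ] LaurentPolynomial.T 1)
    (hhs : ρ (stHs p θ) = stHs p θ ⊗ₜ[ℂ] LaurentPolynomial.T (-1)) (n : ℤ) :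
    ρ (hpow p θ n) = hpow p θ n ⊗ₜ[ℂ] LaurentPolynomial.T n := by
  induction n using Int.induction_on with
  | zero =>
    rw [hpow_zero, map_one, LaurentPolynomial.T_zero]
    exact Algebra.TensorProduct.one_def (R := ℂ) (A := RingQuot (SolidTorusRel p θ))
  | succ k ih =>
    rw [hpow_add, hpow_one, map_mul, ih, hh, tmm p θ,
      ← LaurentPolynomial.T_add]
  | pred k ih =>
    have : (-(k : ℤ) - 1) = (-(k : ℤ)) + (-1) := by ring
    rw [this, hpow_add, hpow_neg_one, map_mul, ih, hhs,
      tmm p θ, ← LaurentPolynomial.T_add]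

lemma rho_Wmod (hh : ρ (stH p θ) = stH p θ ⊗ₜ[ℂ] LaurentPolynomial.T 1)
    (hhs : ρ (stHs p θ) = stHs p θ ⊗ₜ[ℂ] LaurentPolynomial.T (-1))
    (hx : ρ (stX p θ) = stX p θ ⊗ₜ[ℂ] 1)
    (hxs : ρ (stXs p θ) = stXs p θ ⊗ₜ[ℂ] 1)
    {n : ℤ} {s : SolidTorus p θ} (hs : s ∈ Wmod p θ n) :
    ρ s = s ⊗ₜ[ℂ] LaurentPolynomial.T n := by
  obtain ⟨a, ha, rfl⟩ := (mem_Wmod p θ).mp hs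
  rw [map_mul, rho_disc p θ hx hxs ha, rho_hpow p θ hh hhs,
    tmm p θ, one_mul]

/-- The coefficient-of-`T^0` functional on Laurent polynomials. -/
noncomputable def coeff0 : LaurentPolynomial ℂ →ₗ[ℂ] ℂ := Finsupp.lapply 0 ∘ₗ (AddMonoidAlgebra.coeffLinearEquiv ℂ).toLinearMap

lemma coeff0_T (n : ℤ) : coeff0 (LaurentPolynomial.T n) = if n = 0 then 1 else 0 := by
  show (Finsupp.single n (1 : ℂ)) 0 = _
  rw [Finsupp.single_apply]

/-- Projection onto the `T^0` component. -/
noncomputable def proj0 : SolidTorus p θ ⊗[ℂ] LaurentPolynomial ℂ →ₗ[ℂ] SolidTorus p θ :=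
  (TensorProduct.rid ℂ (SolidTorus p θ)).toLinearMap ∘ₗ
    LinearMap.lTensor (SolidTorus p θ) coeff0

lemma proj0_tmul_T (s : SolidTorus p θ) (n : ℤ) :
    proj0 p θ (s ⊗ₜ[ℂ] LaurentPolynomial.T n) = if n = 0 then s else 0 := by
  rw [proj0, LinearMap.comp_apply, LinearMap.lTensor_tmul, LinearEquiv.coe_toLinearMap,
    TensorProduct.rid_tmul, coeff0_T]
  split_ifs with h
  · rw [one_smul]
  · rw [zero_smul]

end SolidTorusAux

open SolidTorusAux in
/-- The coinvariants of the quantum solid torus `O(D_p ×_θ S¹)` under the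
`O(U(1)) = ℂ[u,u⁻¹]` coaction `ρ(x) = x⊗1`, `ρ(h) = h⊗u` are exactly the
subalgebra generated by `x` and `x*` (a copy of the quantum disc `O(D_p)`). -/
theorem solidTorus_coinvariants (p θ : ℝ) (hp0 : 0 < p) (hp1 : p < 1)
    (ρ : SolidTorus p θ →ₐ[ℂ] SolidTorus p θ ⊗[ℂ] LaurentPolynomial ℂ)
    (hx : ρ (stX p θ) = stX p θ ⊗ₜ[ℂ] 1)
    (hxs : ρ (stXs p θ) = stXs p θ ⊗ₜ[ℂ] 1)
    (hh : ρ (stH p θ) = stH p θ ⊗ₜ[ℂ] LaurentPolynomial.T 1)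
    (hhs : ρ (stHs p θ) = stHs p θ ⊗ₜ[ℂ] LaurentPolynomial.T (-1)) :
    ∀ pp : SolidTorus p θ,
      ρ pp = pp ⊗ₜ[ℂ] 1 ↔ pp ∈ Algebra.adjoin ℂ {stX p θ, stXs p θ} := by
  intro pp
  constructor
  · intro hinv
    obtain ⟨f, hf, hsum⟩ :=
      (Submodule.mem_iSup_iff_exists_finsupp (Wmod p θ) pp).mp (mem_S p θ pp)
    have h1 : proj0 p θ (ρ pp) = pp := by
      rw [hinv, ← LaurentPolynomial.T_zero, proj0_tmul_T, if_pos rfl]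
    have h2 : proj0 p θ (ρ pp) = f 0 := by
      conv_lhs => rw [← hsum]
      rw [map_finsuppSum, map_finsuppSum]
      have : (f.sum fun n s => proj0 p θ (ρ s)) =
          f.sum fun n s => if n = 0 then s else 0 := by
        refine Finsupp.sum_congr fun n hn => ?_
        rw [rho_Wmod p θ hh hhs hx hxs (hf n), proj0_tmul_T]
      rw [this, Finsupp.sum]
      rw [Finset.sum_ite_eq' f.support 0 (fun n => f n)]
      split_ifs with h
      · rfl
      · exact (Finsupp.notMem_support_iff.mp h).symm
    have hpp : pp = f 0 := by rw [← h1, h2]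
    have h0 := (mem_Wmod p θ).mp (hf 0)
    obtain ⟨a, ha, ea⟩ := h0
    rw [hpp, ← ea, hpow_zero, mul_one]
    exact ha
  · intro hmem
    exact rho_disc p θ hx hxs hmem
end
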